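/- arXiv:2512.03396 — 2 statements merged into one kernel-verified Lean document; each statement's English description precedes it below -/
import Mathlib

section
/- Let ν be a continuous capacity on a measurable space (Ω, F). Then ν is supermodular if and only if for all bounded measurable X, Y : Ω → ℝ, all λ ∈ [0,1], and all α ∈ (0,1]: ∫₀^α q_ν(λX + (1−λ)Y, β) dβ ≥ λ ∫₀^α q_ν(X, β) dβ + (1−λ) ∫₀^α q_ν(Y, β) dβ. (For compactly supported distributions this integrated-quantile condition is equivalent to the paper's concavity of the Choquet act-to-distribution mapping 𝔇_ν with respect to second-order stochastic dominance.) -/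
open MeasureTheory Filter Topology

noncomputable section

/-- Bounded measurable real-valued functions with respect to the σ-algebra `m`. -/
def BddMeas {Ω : Type*} (m : MeasurableSpace Ω) (X : Ω → ℝ) : Prop :=
  @Measurable Ω ℝ m _ X ∧ ∃ M : ℝ, ∀ ω, |X ω| ≤ M

/-- A capacity on a measurable space. -/
def IsCapacity {Ω : Type*} (m : MeasurableSpace Ω) (ν : Set Ω → ℝ) : Prop :=
  ν ∅ = 0 ∧ ν Set.univ = 1 ∧
    ∀ A B : Set Ω, @MeasurableSet Ω m A → @MeasurableSet Ω m B → A ⊆ B → ν A ≤ ν B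

/-- A continuous capacity: continuous along increasing and decreasing sequences. -/
def IsContinuousCapacity {Ω : Type*} (m : MeasurableSpace Ω) (ν : Set Ω → ℝ) : Prop :=
  IsCapacity m ν ∧
    (∀ A : ℕ → Set Ω, (∀ n, @MeasurableSet Ω m (A n)) → Monotone A →
      Filter.Tendsto (fun n => ν (A n)) Filter.atTop (nhds (ν (⋃ n, A n)))) ∧
    (∀ A : ℕ → Set Ω, (∀ n, @MeasurableSet Ω m (A n)) → Antitone A →
      Filter.Tendsto (fun n => ν (A n)) Filter.atTop (nhds (ν (⋂ n, A n))))

/-- Supermodularity of a capacity. -/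
def Supermodular {Ω : Type*} (m : MeasurableSpace Ω) (ν : Set Ω → ℝ) : Prop :=
  ∀ A B : Set Ω, @MeasurableSet Ω m A → @MeasurableSet Ω m B →
    ν A + ν B ≤ ν (A ∪ B) + ν (A ∩ B)

/-- A distribution: a compactly supported Borel probability measure on ℝ. -/
def IsDistribution (Q : Measure ℝ) : Prop :=
  IsProbabilityMeasure Q ∧ ∃ a b : ℝ, Q (Set.Icc a b) = 1

/-- `FSDle P Q` means `Q ≥_fsd P` (first-order stochastic dominance). -/
def FSDle (P Q : Measure ℝ) : Prop := ∀ x : ℝ, P (Set.Ioi x) ≤ Q (Set.Ioi x)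

/-- Weak convergence of a sequence of Borel measures on ℝ. -/
def WeakConv (Qn : ℕ → Measure ℝ) (Q : Measure ℝ) : Prop :=
  ∀ f : BoundedContinuousFunction ℝ ℝ,
    Filter.Tendsto (fun n => ∫ x, f x ∂(Qn n)) Filter.atTop (nhds (∫ x, f x ∂Q))

/-- A statistic: strictly fsd-monotone and compactly continuous functional on distributions. -/
def IsStatistic (γ : Measure ℝ → ℝ) : Prop :=
  (∀ Q P : Measure ℝ, IsDistribution Q → IsDistribution P → FSDle P Q → γ P ≤ γ Q) ∧
  (∀ Q P : Measure ℝ, IsDistribution Q → IsDistribution P → FSDle P Q → Q ≠ P → γ P < γ Q) ∧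
  (∀ (Qn : ℕ → Measure ℝ) (Q : Measure ℝ), (∀ n, IsDistribution (Qn n)) → IsDistribution Q →
    (∃ a b : ℝ, ∀ n, Qn n (Set.Icc a b) = 1) → WeakConv Qn Q →
    Filter.Tendsto (fun n => γ (Qn n)) Filter.atTop (nhds (γ Q)))

/-- A certainty-equivalent statistic. -/
def IsCEStatistic (γ : Measure ℝ → ℝ) : Prop :=
  IsStatistic γ ∧ ∀ c : ℝ, γ (MeasureTheory.Measure.dirac c) = c

/-- `D` is the Choquet act-to-distribution mapping associated with the capacity `ν`. -/
def IsChoquetATD {Ω : Type*} (m : MeasurableSpace Ω) (ν : Set Ω → ℝ)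
    (D : (Ω → ℝ) → Measure ℝ) : Prop :=
  ∀ X : Ω → ℝ, BddMeas m X →
    IsDistribution (D X) ∧ ∀ x : ℝ, (D X (Set.Ioi x)).toReal = ν {ω | x < X ω}

/-- The ν-quantile of `X` at level `α`. -/
def capQuantile {Ω : Type*} (ν : Set Ω → ℝ) (X : Ω → ℝ) (α : ℝ) : ℝ :=
  sInf {x : ℝ | ν {ω | x < X ω} < 1 - α}

/-- The quantile function of a distribution. -/
def distQuantile (Q : Measure ℝ) (α : ℝ) : ℝ :=
  sInf {x : ℝ | (Q (Set.Ioi x)).toReal < 1 - α}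

/-- Comonotonic pairs of functions. -/
def Comonotonic {Ω : Type*} (X Y : Ω → ℝ) : Prop :=
  ∀ s s' : Ω, 0 ≤ (X s - X s') * (Y s - Y s')

/-- Real-valued indicator function of a set. -/
def ind {Ω : Type*} (A : Set Ω) : Ω → ℝ := A.indicator fun _ => 1

/-- Atomlessness of `P` in the sense of the paper. -/
def AtomlessOn {Ω : Type*} (G : MeasurableSpace Ω) (P : @Measure Ω G) : Prop :=
  ∀ A : Set Ω, @MeasurableSet Ω G A → ∀ r : ENNReal, r ≤ P A →
    ∃ B : Set Ω, @MeasurableSet Ω G B ∧ B ⊆ A ∧ P B = r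

/-- A capacity is risk conforming if it coincides with `P` on `G`. -/
def RiskConforming {Ω : Type*} (G : MeasurableSpace Ω) (P : @Measure Ω G)
    (ν : Set Ω → ℝ) : Prop :=
  ∀ A : Set Ω, @MeasurableSet Ω G A → ν A = (P A).toReal

/-- A preference relation: a total preorder on the bounded `m`-measurable functions. -/
def TotalPreorderOn {Ω : Type*} (m : MeasurableSpace Ω)
    (pref : (Ω → ℝ) → (Ω → ℝ) → Prop) : Prop :=
  (∀ X Y, BddMeas m X → BddMeas m Y → pref X Y ∨ pref Y X) ∧
  (∀ X Y Z, BddMeas m X → BddMeas m Y → BddMeas m Z → pref X Y → pref Y Z → pref X Z)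

/-- Axiom (M): monotonicity. -/
def AxiomM {Ω : Type*} (m : MeasurableSpace Ω) (pref : (Ω → ℝ) → (Ω → ℝ) → Prop) : Prop :=
  ∀ X Y, BddMeas m X → BddMeas m Y → (∀ ω, Y ω ≤ X ω) → pref X Y

/-- Axiom (RC): risk conformity. -/
def AxiomRC {Ω : Type*} (G : MeasurableSpace Ω) (P : @Measure Ω G)
    (pref : (Ω → ℝ) → (Ω → ℝ) → Prop) : Prop :=
  ∀ X Y, BddMeas G X → BddMeas G Y →
    (∀ x : ℝ, P {ω | x < X ω} = P {ω | x < Y ω}) → pref X Y ∧ pref Y X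

/-- Axiom (SRM): strict risk monotonicity. -/
def AxiomSRM {Ω : Type*} (G : MeasurableSpace Ω) (P : @Measure Ω G)
    (pref : (Ω → ℝ) → (Ω → ℝ) → Prop) : Prop :=
  ∀ X Y, BddMeas G X → BddMeas G Y →
    P {ω | Y ω ≤ X ω} = 1 → 0 < P {ω | Y ω < X ω} → pref X Y ∧ ¬ pref Y X

/-- Axiom (C): continuity (B-closedness of upper and lower contour sets). -/
def AxiomC {Ω : Type*} (m : MeasurableSpace Ω) (pref : (Ω → ℝ) → (Ω → ℝ) → Prop) : Prop :=
  ∀ X, BddMeas m X → ∀ (Yn : ℕ → Ω → ℝ) (Y : Ω → ℝ),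
    (∀ n, BddMeas m (Yn n)) → BddMeas m Y →
    (∃ M : ℝ, ∀ n ω, |Yn n ω| ≤ M) →
    (∀ ω, Filter.Tendsto (fun n => Yn n ω) Filter.atTop (nhds (Y ω))) →
    ((∀ n, pref X (Yn n)) → pref X Y) ∧ ((∀ n, pref (Yn n) X) → pref Y X)

/-- Axiom (CD): cumulative dominance. -/
def AxiomCD {Ω : Type*} (m : MeasurableSpace Ω) (pref : (Ω → ℝ) → (Ω → ℝ) → Prop) : Prop :=
  ∀ X Y, BddMeas m X → BddMeas m Y →
    (∀ x : ℝ, pref (ind {ω | x < X ω}) (ind {ω | x < Y ω}) ∧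
       pref (ind {ω | x < Y ω}) (ind {ω | x < X ω})) →
    pref X Y ∧ pref Y X

/-- `SSDle P Q` means `Q ≥_ssd P` (second-order stochastic dominance). -/
def SSDle (P Q : Measure ℝ) : Prop :=
  ∀ f : ℝ → ℝ, Monotone f → ConcaveOn ℝ Set.univ f → ∫ x, f x ∂P ≤ ∫ x, f x ∂Q

/-- Comonotonic quasiconcavity of a statistic. -/
def ComonotonicQuasiconcave (γ : Measure ℝ → ℝ) : Prop :=
  ∀ Q P R : Measure ℝ, IsDistribution Q → IsDistribution P → IsDistribution R →
    ∀ l : ℝ, 0 ≤ l → l ≤ 1 →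
    (∀ β : ℝ, 0 < β → β < 1 →
      distQuantile R β = l * distQuantile Q β + (1 - l) * distQuantile P β) →
    min (γ Q) (γ P) ≤ γ R

/-- Exactness of a capacity. -/
def ExactCapacity {Ω : Type*} (m : MeasurableSpace Ω) (ν : Set Ω → ℝ) : Prop :=
  ∀ A : Set Ω, @MeasurableSet Ω m A →
    ∃ μ : @Measure Ω m, @IsProbabilityMeasure Ω m μ ∧
      (∀ B : Set Ω, @MeasurableSet Ω m B → ν B ≤ (μ B).toReal) ∧ (μ A).toReal = ν A


/-!
For `a ≤ X ≤ b` and `0 < α ≤ 1`, the layer-cake formula identifies `∫₀^α q_ν(X, β) dβ` with the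
Choquet integral of `X` with respect to the distorted set function `ν_α = (ν - (1 - α))⁺`, and
`ν_α` is supermodular whenever `ν` is. Choquet integrals are positively homogeneous, and with
respect to a supermodular set function they are superadditive: approximating `X` and `Y` from
above by step functions built on their level sets, superadditivity reduces to the inequality
`∑ᵢ μ Aᵢ ≤ ∑ₖ μ {ω covered by at least k of the Aᵢ}`. This gives the concavity.
Conversely, for `X = 1_A`, `Y = 1_B`, `λ = 1/2` and `α = 1` the three integrated quantiles are
`ν A`, `ν B` and `(ν (A ∪ B) + ν (A ∩ B)) / 2`, so concavity is supermodularity.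
-/

open Set

/-- The upper quantile function of a survival function `G`; `capQuantile ν X` is by definition
`survivalQuantile (fun y => ν {ω | y < X ω})`. -/
def survivalQuantile (G : ℝ → ℝ) (β : ℝ) : ℝ := sInf {x | G x < 1 - β}

section SurvivalQuantile

variable {G : ℝ → ℝ} {a b α β y : ℝ}

lemma le_of_mem_setOf_lt_one_sub (hlow : ∀ y < a, G y = 1) (hβ : 0 ≤ β) {x : ℝ}
    (hx : x ∈ {x | G x < 1 - β}) : a ≤ x := by
  by_contra! h
  rw [mem_ofPred_eq, hlow x h] at hx
  linarith

lemma mem_setOf_lt_one_sub (hhigh : ∀ y, b ≤ y → G y = 0) (hβ : β < 1) :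
    b ∈ {x | G x < 1 - β} := by
  rw [mem_ofPred_eq, hhigh b le_rfl]
  linarith

lemma survivalQuantile_mem_Icc (hlow : ∀ y < a, G y = 1) (hhigh : ∀ y, b ≤ y → G y = 0)
    (hβ0 : 0 ≤ β) (hβ1 : β < 1) : survivalQuantile G β ∈ Icc a b :=
  ⟨le_csInf ⟨b, mem_setOf_lt_one_sub hhigh hβ1⟩ fun _ => le_of_mem_setOf_lt_one_sub hlow hβ0,
    csInf_le ⟨a, fun _ => le_of_mem_setOf_lt_one_sub hlow hβ0⟩ (mem_setOf_lt_one_sub hhigh hβ1)⟩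

lemma survivalQuantile_monotoneOn (hlow : ∀ y < a, G y = 1) (hhigh : ∀ y, b ≤ y → G y = 0) :
    MonotoneOn (survivalQuantile G) (Ico 0 1) := by
  intro β₁ hβ₁ β₂ hβ₂ h
  refine csInf_le_csInf ⟨a, fun _ => le_of_mem_setOf_lt_one_sub hlow hβ₁.1⟩
    ⟨b, mem_setOf_lt_one_sub hhigh hβ₂.2⟩ fun x hx => ?_
  rw [mem_ofPred_eq] at hx ⊢
  linarith

lemma one_sub_le_of_lt_survivalQuantile (hlow : ∀ y < a, G y = 1) (hβ : 0 ≤ β)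
    (h : y < survivalQuantile G β) : 1 - β ≤ G y := by
  by_contra! hy
  exact h.not_ge (csInf_le ⟨a, fun _ => le_of_mem_setOf_lt_one_sub hlow hβ⟩ hy)

lemma le_survivalQuantile_of_one_sub_lt (hG : Antitone G) (hhigh : ∀ y, b ≤ y → G y = 0)
    (hβ : β < 1) (h : 1 - β < G y) : y ≤ survivalQuantile G β := by
  refine le_csInf ⟨b, mem_setOf_lt_one_sub hhigh hβ⟩ fun x hx => ?_
  by_contra! hxy
  rw [mem_ofPred_eq] at hx
  linarith [hG hxy.le]

lemma volume_lt_survivalQuantile_le (hlow : ∀ y < a, G y = 1) (y : ℝ) :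
    volume ({β | y < survivalQuantile G β} ∩ Ioo 0 α) ≤
      ENNReal.ofReal (max (G y - (1 - α)) 0) :=
  calc volume ({β | y < survivalQuantile G β} ∩ Ioo 0 α)
      ≤ volume (Icc (1 - G y) α) :=
        measure_mono fun β ⟨hβ, hβα⟩ =>
          ⟨by linarith [one_sub_le_of_lt_survivalQuantile hlow hβα.1.le hβ], hβα.2.le⟩
    _ = ENNReal.ofReal (max (G y - (1 - α)) 0) := by
        rw [Real.volume_Icc, ENNReal.ofReal_max, ENNReal.ofReal_zero, max_eq_left zero_le]
        ring_nf

lemma le_volume_le_survivalQuantile (hG : Antitone G) (hlow : ∀ y < a, G y = 1)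
    (hhigh : ∀ y, b ≤ y → G y = 0) (hα : α ≤ 1) (y : ℝ) :
    ENNReal.ofReal (max (G y - (1 - α)) 0) ≤
      volume ({β | y ≤ survivalQuantile G β} ∩ Ioo 0 α) := by
  have hG1 : G y ≤ 1 := (hG (min_le_right (a - 1) y)).trans_eq (hlow _ (by simp))
  calc ENNReal.ofReal (max (G y - (1 - α)) 0)
      = volume (Ioo (1 - G y) α) := by
        rw [Real.volume_Ioo, ENNReal.ofReal_max, ENNReal.ofReal_zero, max_eq_left zero_le]
        ring_nf
    _ ≤ volume ({β | y ≤ survivalQuantile G β} ∩ Ioo 0 α) :=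
        measure_mono fun β hβ => ⟨le_survivalQuantile_of_one_sub_lt hG hhigh
          (by linarith [hβ.2]) (by linarith [hβ.1]), by linarith [hβ.1], hβ.2⟩

lemma aemeasurable_survivalQuantile (hlow : ∀ y < a, G y = 1) (hhigh : ∀ y, b ≤ y → G y = 0)
    (hα : α ≤ 1) : AEMeasurable (survivalQuantile G) (volume.restrict (Ioo 0 α)) :=
  aemeasurable_restrict_of_monotoneOn measurableSet_Ioo
    ((survivalQuantile_monotoneOn hlow hhigh).mono fun _ hβ => ⟨hβ.1.le, hβ.2.trans_le hα⟩)

/-- The layer-cake formula for `survivalQuantile G - a` on `(0, α)`: its layer at height `t` lies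
between `(1 - G (t + a), α)` and `[1 - G (t + a), α]`. -/
lemma lintegral_survivalQuantile_sub (hG : Antitone G) (hlow : ∀ y < a, G y = 1)
    (hhigh : ∀ y, b ≤ y → G y = 0) (hα : α ≤ 1) :
    ∫⁻ β in Ioo 0 α, ENNReal.ofReal (survivalQuantile G β - a) =
      ∫⁻ t in Ioi 0, ENNReal.ofReal (max (G (t + a) - (1 - α)) 0) := by
  have hnn : 0 ≤ᵐ[volume.restrict (Ioo 0 α)] fun β => survivalQuantile G β - a :=
    ae_restrict_of_forall_mem measurableSet_Ioo fun β hβ => sub_nonneg.2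
      (survivalQuantile_mem_Icc hlow hhigh hβ.1.le (hβ.2.trans_le hα)).1
  have hmeas := (aemeasurable_survivalQuantile hlow hhigh hα).sub_const a
  refine le_antisymm ?_ ?_
  · rw [lintegral_eq_lintegral_meas_lt _ hnn hmeas]
    refine lintegral_mono fun t => ?_
    simp only [Measure.restrict_apply' measurableSet_Ioo, lt_sub_iff_add_lt]
    exact volume_lt_survivalQuantile_le hlow _
  · rw [lintegral_eq_lintegral_meas_le _ hnn hmeas]
    refine lintegral_mono fun t => ?_
    simp only [Measure.restrict_apply' measurableSet_Ioo, le_sub_iff_add_le]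
    exact le_volume_le_survivalQuantile hG hlow hhigh hα _

theorem integral_survivalQuantile (hG : Antitone G) (hlow : ∀ y < a, G y = 1)
    (hhigh : ∀ y, b ≤ y → G y = 0) (hα0 : 0 < α) (hα1 : α ≤ 1) :
    ∫ β in 0..α, survivalQuantile G β = a * α + ∫ y in a..b, max (G y - (1 - α)) 0 := by
  set q := survivalQuantile G
  set w : ℝ → ℝ := fun y => max (G y - (1 - α)) 0
  have hq_mem : ∀ β ∈ Ioo 0 α, q β ∈ Icc a b := fun β hβ =>
    survivalQuantile_mem_Icc hlow hhigh hβ.1.le (hβ.2.trans_le hα1)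
  have hq_meas := aemeasurable_survivalQuantile hlow hhigh hα1
  have hq_int : IntegrableOn q (Ioo 0 α) :=
    Integrable.of_bound hq_meas.aestronglyMeasurable (max |a| |b|)
      (ae_restrict_of_forall_mem measurableSet_Ioo fun β hβ =>
        abs_le_max_abs_abs (hq_mem β hβ).1 (hq_mem β hβ).2)
  have hw_anti : Antitone fun t => w (t + a) := fun s t hst =>
    max_le_max (by linarith [hG (by linarith : s + a ≤ t + a)]) le_rfl
  have hw_vanish : ∀ t ∈ Ioi 0 \ Ioc 0 (b - a), w (t + a) = 0 := fun t ht => by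
    have hb : b ≤ t + a := by linarith [not_le.1 fun h => ht.2 ⟨ht.1, h⟩]
    simp only [w, hhigh _ hb]
    exact max_eq_right (by linarith)
  have hab : a ≤ b := (hq_mem (α / 2) ⟨by linarith, by linarith⟩).1.trans
    (hq_mem (α / 2) ⟨by linarith, by linarith⟩).2
  calc ∫ β in 0..α, q β
      = (∫ β in Ioo 0 α, (q β - a)) + a * α := by
        rw [intervalIntegral.integral_of_le hα0.le, integral_Ioc_eq_integral_Ioo,
          integral_sub hq_int (integrable_const a), setIntegral_const, Real.volume_real_Ioo,
          smul_eq_mul, sub_zero, max_eq_left hα0.le]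
        ring
    _ = (∫ t in Ioi 0, w (t + a)) + a * α := by
        rw [integral_eq_lintegral_of_nonneg_ae (ae_restrict_of_forall_mem measurableSet_Ioo
            fun β hβ => sub_nonneg.2 (hq_mem β hβ).1) (hq_meas.sub_const a).aestronglyMeasurable,
          lintegral_survivalQuantile_sub hG hlow hhigh hα1,
          integral_eq_lintegral_of_nonneg_ae (f := fun t => w (t + a))
            (Eventually.of_forall fun t => le_max_right _ _)
            hw_anti.measurable.aestronglyMeasurable]
    _ = a * α + ∫ y in a..b, w y := by
        rw [setIntegral_eq_of_subset_of_forall_sdiff_eq_zero measurableSet_Ioi Ioc_subset_Ioi_self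
          hw_vanish, ← intervalIntegral.integral_of_le (by linarith),
          intervalIntegral.integral_comp_add_right w a]
        ring_nf

end SurvivalQuantile

section ChoquetIntegral

variable {Ω : Type*} {μ : Set Ω → ℝ} {X Y : Ω → ℝ} {a b a' b' c : ℝ}

/-- The Choquet integral `∫₀^∞ μ {X > y} dy + ∫_{-∞}^0 (μ {X > y} - μ univ) dy`, truncated to the
window `[a, b]`; it does not depend on the window once `a ≤ X ≤ b` (`choquetOn_eq_of_window`). -/
def choquetOn (μ : Set Ω → ℝ) (X : Ω → ℝ) (a b : ℝ) : ℝ :=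
  a * μ univ + ∫ y in a..b, μ {ω | y < X ω}

lemma choquetOn_add_const (X : Ω → ℝ) (a b c : ℝ) :
    choquetOn μ (fun ω => X ω + c) (a + c) (b + c) = choquetOn μ X a b + c * μ univ := by
  have hlayer : (fun y => μ {ω | y < X ω + c}) = fun y => μ {ω | y - c < X ω} := by
    simp only [sub_lt_iff_lt_add]
  rw [choquetOn, choquetOn, hlayer,
    intervalIntegral.integral_comp_sub_right (fun y => μ {ω | y < X ω}), add_sub_cancel_right,
    add_sub_cancel_right]
  ring

lemma choquetOn_const_mul {l : ℝ} (hl : 0 < l) (X : Ω → ℝ) (a b : ℝ) :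
    choquetOn μ (fun ω => l * X ω) (l * a) (l * b) = l * choquetOn μ X a b := by
  have hlayer : (fun y => μ {ω | y < l * X ω}) = fun y => μ {ω | y / l < X ω} := by
    simp only [div_lt_iff₀' hl]
  rw [choquetOn, choquetOn, hlayer,
    intervalIntegral.integral_comp_div (fun y => μ {ω | y < X ω}) hl.ne', smul_eq_mul,
    mul_div_cancel_left₀ _ hl.ne', mul_div_cancel_left₀ _ hl.ne']
  ring

variable [MeasurableSpace Ω]

lemma antitone_layer (hμ : MonotoneOn μ {s | MeasurableSet s}) (hX : Measurable X) :
    Antitone fun y => μ {ω | y < X ω} := fun _ _ hyz =>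
  hμ (measurableSet_lt measurable_const hX) (measurableSet_lt measurable_const hX)
    fun _ hω => hyz.trans_lt hω

lemma intervalIntegrable_layer (hμ : MonotoneOn μ {s | MeasurableSet s}) (hX : Measurable X)
    (a b : ℝ) : IntervalIntegrable (fun y => μ {ω | y < X ω}) volume a b :=
  (antitone_layer hμ hX).intervalIntegrable

lemma layer_nonneg (hμ : MonotoneOn μ {s | MeasurableSet s}) (h0 : μ ∅ = 0)
    (hX : Measurable X) (y : ℝ) : 0 ≤ μ {ω | y < X ω} :=
  h0 ▸ hμ MeasurableSet.empty (measurableSet_lt measurable_const hX) (empty_subset _)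

lemma choquetOn_mono (hμ : MonotoneOn μ {s | MeasurableSet s}) (hX : Measurable X)
    (hY : Measurable Y) (hXY : ∀ ω, X ω ≤ Y ω) (hab : a ≤ b) :
    choquetOn μ X a b ≤ choquetOn μ Y a b :=
  add_le_add_right (intervalIntegral.integral_mono_on hab
    (intervalIntegrable_layer hμ hX a b) (intervalIntegrable_layer hμ hY a b)
    fun _ _ => hμ (measurableSet_lt measurable_const hX) (measurableSet_lt measurable_const hY)
      fun ω hω => hω.trans_le (hXY ω)) _

lemma choquetOn_le_of_le_right (hμ : MonotoneOn μ {s | MeasurableSet s}) (h0 : μ ∅ = 0)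
    (hX : Measurable X) (hb : b ≤ b') : choquetOn μ X a b ≤ choquetOn μ X a b' := by
  have hint := intervalIntegrable_layer hμ hX
  rw [choquetOn, choquetOn,
    ← intervalIntegral.integral_add_adjacent_intervals (hint a b) (hint b b')]
  linarith [intervalIntegral.integral_nonneg (μ := volume) hb fun y _ => layer_nonneg hμ h0 hX y]

lemma choquetOn_eq_of_window (hμ : MonotoneOn μ {s | MeasurableSet s}) (h0 : μ ∅ = 0)
    (hX : Measurable X) (hXab : ∀ ω, X ω ∈ Icc a b) (ha : a' ≤ a) (hb : b ≤ b') :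
    choquetOn μ X a' b' = choquetOn μ X a b := by
  have hint := intervalIntegrable_layer hμ hX
  have hbelow : ∫ y in a'..a, μ {ω | y < X ω} = ∫ _ in a'..a, μ univ :=
    intervalIntegral.integral_congr_Ioo_of_le ha fun y hy => by
      rw [eq_univ_of_forall (s := {ω | y < X ω}) fun ω => hy.2.trans_le (hXab ω).1]
  have habove : ∫ y in b..b', μ {ω | y < X ω} = ∫ _ in b..b', (0 : ℝ) :=
    intervalIntegral.integral_congr_Ioo_of_le hb fun y hy => by
      rw [eq_empty_of_forall_notMem (s := {ω | y < X ω}) fun ω hω =>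
        (hXab ω).2.not_gt (hy.1.trans hω), h0]
  rw [choquetOn, choquetOn,
    ← intervalIntegral.integral_add_adjacent_intervals (hint _ _) (hint _ _),
    ← intervalIntegral.integral_add_adjacent_intervals (hint _ _) (hint _ _), hbelow, habove,
    intervalIntegral.integral_const, intervalIntegral.integral_zero, smul_eq_mul]
  ring

lemma choquetOn_add_const_le (hμ : MonotoneOn μ {s | MeasurableSet s}) (h0 : μ ∅ = 0)
    (hX : Measurable X) (hXab : ∀ ω, X ω ∈ Icc a b) (hc : 0 ≤ c) :
    choquetOn μ (fun ω => X ω + c) a b ≤ choquetOn μ X a b + c * μ univ := by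
  have hXc : Measurable fun ω => X ω + c := hX.add_const c
  calc choquetOn μ (fun ω => X ω + c) a b
      ≤ choquetOn μ (fun ω => X ω + c) a (b + c) :=
        choquetOn_le_of_le_right hμ h0 hXc (by linarith)
    _ = choquetOn μ (fun ω => X ω + c) (a + c) (b + c) :=
        choquetOn_eq_of_window hμ h0 hXc
          (fun ω => ⟨by linarith [(hXab ω).1], by linarith [(hXab ω).2]⟩) (by linarith) le_rfl
    _ = choquetOn μ X a b + c * μ univ := choquetOn_add_const X a b c

end ChoquetIntegral

section CoverCount

variable {Ω : Type*} {X : Ω → ℝ} {a ε : ℝ}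

def coverCount (L : List (Set Ω)) (ω : Ω) : ℕ := (L.map fun A => A.indicator 1 ω).sum

def coveredAtLeast (L : List (Set Ω)) (k : ℕ) : Set Ω := {ω | k ≤ coverCount L ω}

lemma coverCount_cons (A : Set Ω) (L : List (Set Ω)) (ω : Ω) :
    coverCount (A :: L) ω = A.indicator 1 ω + coverCount L ω := by
  simp [coverCount]

lemma coverCount_append (L₁ L₂ : List (Set Ω)) (ω : Ω) :
    coverCount (L₁ ++ L₂) ω = coverCount L₁ ω + coverCount L₂ ω := by
  simp [coverCount]

lemma coverCount_le_length (L : List (Set Ω)) (ω : Ω) : coverCount L ω ≤ L.length := by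
  induction L with
  | nil => rfl
  | cons A L ih =>
    have : A.indicator 1 ω ≤ 1 := indicator_apply_le' (fun _ => le_rfl) fun _ => zero_le_one
    rw [coverCount_cons, List.length_cons]
    omega

lemma coverCount_map_range (f : ℕ → Set Ω) (n : ℕ) (ω : Ω) [DecidablePred fun k => ω ∈ f k] :
    coverCount ((List.range n).map f) ω = Nat.count (fun k => ω ∈ f k) n := by
  induction n with
  | zero => rfl
  | succ n ih =>
    rw [List.range_succ, List.map_append, coverCount_append, ih, Nat.count_succ]
    simp [coverCount, indicator_apply]

lemma coveredAtLeast_zero (L : List (Set Ω)) : coveredAtLeast L 0 = univ := by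
  simp [coveredAtLeast]

lemma coveredAtLeast_length_succ (L : List (Set Ω)) : coveredAtLeast L (L.length + 1) = ∅ :=
  eq_empty_of_forall_notMem fun ω hω => by
    have := coverCount_le_length L ω
    simp only [coveredAtLeast, mem_ofPred_eq] at hω
    omega

lemma coveredAtLeast_succ_subset (L : List (Set Ω)) (k : ℕ) :
    coveredAtLeast L (k + 1) ⊆ coveredAtLeast L k := fun _ hω => (Nat.le_succ k).trans hω

lemma coveredAtLeast_cons_succ (A : Set Ω) (L : List (Set Ω)) (k : ℕ) :
    coveredAtLeast (A :: L) (k + 1) = coveredAtLeast L (k + 1) ∪ (coveredAtLeast L k ∩ A) := by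
  ext ω
  by_cases hω : ω ∈ A <;> simp [coveredAtLeast, coverCount_cons, hω]; omega

lemma coveredAtLeast_map_range {f : ℕ → Set Ω} (hf : Antitone f) {j n : ℕ} (hj : j < n) :
    coveredAtLeast ((List.range n).map f) (j + 1) = f j := by
  classical
  ext ω
  simp only [coveredAtLeast, mem_ofPred_eq, coverCount_map_range]
  constructor
  · intro h
    by_contra hω
    have htail : Nat.count (fun k => ω ∈ f (j + k)) (n - j) = 0 :=
      Nat.count_of_forall_not fun k _ hk => hω (hf (Nat.le_add_right j k) hk)
    have hsplit := Nat.count_add (fun k => ω ∈ f k) j (n - j)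
    rw [Nat.add_sub_cancel' hj.le, htail] at hsplit
    have := Nat.count_le (fun k => ω ∈ f k) (n := j)
    omega
  · intro hω
    calc j + 1 = Nat.count (fun k => ω ∈ f k) (j + 1) :=
          (Nat.count_of_forall fun k hk => hf (Nat.lt_succ_iff.1 hk) hω).symm
      _ ≤ Nat.count (fun k => ω ∈ f k) n := Nat.count_monotone _ hj

def levelSets (X : Ω → ℝ) (a ε : ℝ) (n : ℕ) : List (Set Ω) :=
  (List.range n).map fun k : ℕ => {ω | a + ε * k < X ω}

lemma coveredAtLeast_levelSets (hε : 0 ≤ ε) {j n : ℕ} (hj : j < n) :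
    coveredAtLeast (levelSets X a ε n) (j + 1) = {ω | a + ε * j < X ω} :=
  coveredAtLeast_map_range (f := fun k : ℕ => {ω | a + ε * k < X ω}) (fun k l hkl _ hω =>
    lt_of_le_of_lt (by gcongr : a + ε * k ≤ a + ε * l) hω) hj

lemma levelSets_approx (hε : 0 ≤ ε) {n : ℕ} (hX : ∀ ω, X ω ∈ Icc a (a + ε * n)) (ω : Ω) :
    X ω ≤ a + ε * coverCount (levelSets X a ε n) ω ∧
      a + ε * coverCount (levelSets X a ε n) ω ≤ X ω + ε := by
  set N := coverCount (levelSets X a ε n) ω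
  have hNn : N ≤ n := (coverCount_le_length _ ω).trans_eq (by simp [levelSets])
  have hmem : ∀ j < n, j + 1 ≤ N ↔ a + ε * j < X ω := fun j hj =>
    Set.ext_iff.1 (coveredAtLeast_levelSets hε hj) ω
  constructor
  · rcases hNn.lt_or_eq with hN | hN
    · exact not_lt.1 fun hlt => (Nat.not_succ_le_self N) ((hmem N hN).2 hlt)
    · rw [hN]; exact (hX ω).2
  · by_cases hN : N = 0
    · rw [hN, Nat.cast_zero]; linarith [(hX ω).1]
    · obtain ⟨k, hk⟩ := Nat.exists_eq_succ_of_ne_zero hN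
      have := (hmem k (by omega)).1 hk.ge
      rw [hk]; push_cast; linarith

lemma step_mem_Icc {c : ℝ} (hε : 0 ≤ ε) (L : List (Set Ω)) (ω : Ω) :
    c + ε * coverCount L ω ∈ Icc c (c + ε * L.length) :=
  ⟨le_add_of_nonneg_right (by positivity),
    by gcongr; exact_mod_cast coverCount_le_length L ω⟩

variable [F : MeasurableSpace Ω]

lemma measurable_coverCount {L : List (Set Ω)} (hL : ∀ A ∈ L, MeasurableSet A) :
    Measurable (coverCount L) := by
  induction L with
  | nil => exact measurable_const
  | cons A L ih =>
    simp only [List.mem_cons, forall_eq_or_imp] at hL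
    rw [show coverCount (A :: L) = fun ω => A.indicator 1 ω + coverCount L ω from
      funext (coverCount_cons A L)]
    exact (measurable_const.indicator hL.1).add (ih hL.2)

lemma measurableSet_coveredAtLeast {L : List (Set Ω)} (hL : ∀ A ∈ L, MeasurableSet A) (k : ℕ) :
    MeasurableSet (coveredAtLeast L k) :=
  measurable_coverCount hL measurableSet_Ici

lemma measurable_step {c : ℝ} {L : List (Set Ω)} (hL : ∀ A ∈ L, MeasurableSet A) :
    Measurable fun ω => c + ε * (coverCount L ω : ℝ) :=
  measurable_const.add (measurable_const.mul (measurable_from_top.comp (measurable_coverCount hL)))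

theorem sum_map_le_sum_coveredAtLeast {μ : Set Ω → ℝ} (hsm : Supermodular F μ)
    (h0 : μ ∅ = 0) :
    ∀ L : List (Set Ω), (∀ A ∈ L, MeasurableSet A) →
      (L.map μ).sum ≤ ∑ j ∈ Finset.range L.length, μ (coveredAtLeast L (j + 1))
  | [], _ => by simp
  | A :: L, hL => by
    simp only [List.mem_cons, forall_eq_or_imp] at hL
    set K := coveredAtLeast L
    have hK : ∀ k, MeasurableSet (K k) := measurableSet_coveredAtLeast hL.2
    have hK0 : K 0 = univ := coveredAtLeast_zero L
    have hKlast : K (L.length + 1) = ∅ := coveredAtLeast_length_succ L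
    -- prepending `A` turns `K (j + 1)` into `K (j + 1) ∪ (K j ∩ A)`; by supermodularity this gains
    -- at least `μ (K j ∩ A) - μ (K (j + 1) ∩ A)`, and these gains telescope to `μ A`
    have hstep : ∀ j, μ (K (j + 1)) + μ (K j ∩ A) ≤
        μ (coveredAtLeast (A :: L) (j + 1)) + μ (K (j + 1) ∩ A) := fun j => by
      have := hsm _ _ (hK (j + 1)) ((hK j).inter hL.1)
      rwa [← coveredAtLeast_cons_succ, ← inter_assoc,
        inter_eq_left.2 (coveredAtLeast_succ_subset L j)] at this
    have htelescope : ∑ j ∈ Finset.range (L.length + 1), (μ (K j ∩ A) - μ (K (j + 1) ∩ A)) =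
        μ A := by
      rw [Finset.sum_range_sub', hK0, hKlast, univ_inter, empty_inter, h0, sub_zero]
    calc ((A :: L).map μ).sum = μ A + (L.map μ).sum := List.sum_cons
      _ ≤ μ A + ∑ j ∈ Finset.range (L.length + 1), μ (K (j + 1)) := by
        rw [Finset.sum_range_succ, hKlast, h0, add_zero]
        exact add_le_add_right (sum_map_le_sum_coveredAtLeast hsm h0 L hL.2) _
      _ = ∑ j ∈ Finset.range (L.length + 1),
            (μ (K (j + 1)) + (μ (K j ∩ A) - μ (K (j + 1) ∩ A))) := by
        rw [Finset.sum_add_distrib, htelescope, add_comm]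
      _ ≤ ∑ j ∈ Finset.range (A :: L).length, μ (coveredAtLeast (A :: L) (j + 1)) :=
        Finset.sum_le_sum fun j _ => by linarith [hstep j]

end CoverCount

section Superadditivity

variable {Ω : Type*} [F : MeasurableSpace Ω] {μ : Set Ω → ℝ} {X Y : Ω → ℝ} {a b a' b' c ε : ℝ}

theorem choquetOn_step (hμ : MonotoneOn μ {s | MeasurableSet s}) {L : List (Set Ω)}
    (hL : ∀ A ∈ L, MeasurableSet A) (hε : 0 ≤ ε) (hb : b = c + ε * L.length) :
    choquetOn μ (fun ω => c + ε * coverCount L ω) c b =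
      c * μ univ + ε * ∑ j ∈ Finset.range L.length, μ (coveredAtLeast L (j + 1)) := by
  have hcell : ∀ j : ℕ, ∫ y in (c + ε * j)..(c + ε * (j + 1 : ℕ)),
      μ {ω | y < c + ε * coverCount L ω} = ε * μ (coveredAtLeast L (j + 1)) := fun j => by
    have hle : c + ε * j ≤ c + ε * (j + 1 : ℕ) := by push_cast; nlinarith
    rw [intervalIntegral.integral_congr_Ioo_of_le (g := fun _ => μ (coveredAtLeast L (j + 1))) hle
      fun y hy => ?_, intervalIntegral.integral_const, smul_eq_mul]
    · push_cast; ring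
    · refine congrArg μ (ext fun ω => ?_)
      simp only [coveredAtLeast, mem_ofPred_eq]
      push_cast at hy
      constructor
      · intro h
        by_contra! hN
        have : (coverCount L ω : ℝ) ≤ j := by exact_mod_cast Nat.lt_succ_iff.1 hN
        nlinarith [hy.1]
      · intro hN
        have : (j + 1 : ℝ) ≤ coverCount L ω := by exact_mod_cast hN
        nlinarith [hy.2]
  have hsum := intervalIntegral.sum_integral_adjacent_intervals (μ := volume)
    (a := fun k : ℕ => c + ε * k) (n := L.length)
    fun k _ => intervalIntegrable_layer hμ (measurable_step (c := c) (ε := ε) hL) _ _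
  simp only [Nat.cast_zero, mul_zero, add_zero] at hsum
  rw [choquetOn, hb, ← hsum, Finset.mul_sum]
  exact congrArg _ (Finset.sum_congr rfl fun j _ => hcell j)

lemma measurableSet_of_mem_levelSets (hX : Measurable X) {n : ℕ} :
    ∀ A ∈ levelSets X a ε n, MeasurableSet A := by
  simp only [levelSets, List.mem_map]
  rintro _ ⟨k, -, rfl⟩
  exact measurableSet_lt measurable_const hX

lemma choquetOn_levelSets (hμ : MonotoneOn μ {s | MeasurableSet s}) (hX : Measurable X)
    (hε : 0 ≤ ε) {n : ℕ} (hb : b = a + ε * n) :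
    choquetOn μ (fun ω => a + ε * coverCount (levelSets X a ε n) ω) a b =
      a * μ univ + ε * ((levelSets X a ε n).map μ).sum := by
  have hlen : (levelSets X a ε n).length = n := by simp [levelSets]
  rw [choquetOn_step hμ (measurableSet_of_mem_levelSets hX) hε (by rw [hlen, hb]), hlen,
    Finset.sum_congr rfl fun j hj =>
      congrArg μ (coveredAtLeast_levelSets hε (Finset.mem_range.1 hj))]
  simp [levelSets, Finset.sum_eq_multiset_sum, Multiset.range, Function.comp_def]

theorem le_choquetOn_add_add_mesh_error (hμ : MonotoneOn μ {s | MeasurableSet s})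
    (h0 : μ ∅ = 0) (hsm : Supermodular F μ) (hX : Measurable X) (hY : Measurable Y)
    (hXab : ∀ ω, X ω ∈ Icc a b) (hYab : ∀ ω, Y ω ∈ Icc a b) (hab : a ≤ b) {n : ℕ}
    (hn : 0 < n) :
    choquetOn μ X a b + choquetOn μ Y a b ≤
      choquetOn μ (fun ω => X ω + Y ω) (a + a) (b + b) + 2 * ((b - a) / n) * μ univ := by
  set ε := (b - a) / n
  have hε : 0 ≤ ε := div_nonneg (by linarith) n.cast_nonneg
  have hb : b = a + ε * n := by
    rw [div_mul_cancel₀ _ (Nat.cast_ne_zero.2 hn.ne')]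
    ring
  set LX := levelSets X a ε n
  set LY := levelSets Y a ε n
  have hXn := levelSets_approx hε (hb ▸ hXab)
  have hYn := levelSets_approx hε (hb ▸ hYab)
  have hLX : ∀ A ∈ LX, MeasurableSet A := measurableSet_of_mem_levelSets hX
  have hLY : ∀ A ∈ LY, MeasurableSet A := measurableSet_of_mem_levelSets hY
  have hLXY : ∀ A ∈ LX ++ LY, MeasurableSet A := fun A hA =>
    (List.mem_append.1 hA).elim (hLX A) (hLY A)
  calc choquetOn μ X a b + choquetOn μ Y a b
      ≤ choquetOn μ (fun ω => a + ε * coverCount LX ω) a b +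
          choquetOn μ (fun ω => a + ε * coverCount LY ω) a b :=
        add_le_add (choquetOn_mono hμ hX (measurable_step hLX) (fun ω => (hXn ω).1) hab)
          (choquetOn_mono hμ hY (measurable_step hLY) (fun ω => (hYn ω).1) hab)
    _ = (a + a) * μ univ + ε * ((LX ++ LY).map μ).sum := by
        rw [choquetOn_levelSets hμ hX hε hb, choquetOn_levelSets hμ hY hε hb, List.map_append,
          List.sum_append]
        ring
    _ ≤ (a + a) * μ univ +
          ε * ∑ j ∈ Finset.range (LX ++ LY).length, μ (coveredAtLeast (LX ++ LY) (j + 1)) := by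
        gcongr
        exact sum_map_le_sum_coveredAtLeast hsm h0 _ hLXY
    _ = choquetOn μ (fun ω => (a + a) + ε * coverCount (LX ++ LY) ω) (a + a) (b + b) :=
        (choquetOn_step hμ hLXY hε (by simp [LX, LY, levelSets, hb]; ring)).symm
    _ ≤ choquetOn μ (fun ω => X ω + Y ω + 2 * ε) (a + a) (b + b) :=
        choquetOn_mono hμ (measurable_step hLXY) ((hX.add hY).add_const _) (fun ω => by
          rw [coverCount_append]; push_cast; linarith [(hXn ω).2, (hYn ω).2]) (by linarith)
    _ ≤ choquetOn μ (fun ω => X ω + Y ω) (a + a) (b + b) + 2 * ε * μ univ :=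
        choquetOn_add_const_le (X := fun ω => X ω + Y ω) hμ h0 (hX.add hY)
          (fun ω => ⟨add_le_add (hXab ω).1 (hYab ω).1, add_le_add (hXab ω).2 (hYab ω).2⟩)
          (by positivity)

theorem le_choquetOn_add_of_same_window [Nonempty Ω] (hμ : MonotoneOn μ {s | MeasurableSet s})
    (h0 : μ ∅ = 0) (hsm : Supermodular F μ) (hX : Measurable X) (hY : Measurable Y)
    (hXab : ∀ ω, X ω ∈ Icc a b) (hYab : ∀ ω, Y ω ∈ Icc a b) :
    choquetOn μ X a b + choquetOn μ Y a b ≤ choquetOn μ (fun ω => X ω + Y ω) (a + a) (b + b) := by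
  obtain ⟨ω⟩ := ‹Nonempty Ω›
  set R := choquetOn μ (fun ω => X ω + Y ω) (a + a) (b + b)
  have hlim : Tendsto (fun n : ℕ => R + 2 * ((b - a) / n) * μ univ) atTop (𝓝 R) := by
    simpa using tendsto_const_nhds.add
      (((tendsto_const_div_atTop_nhds_zero_nat (b - a)).const_mul 2).mul_const (μ univ))
  exact ge_of_tendsto hlim ((eventually_gt_atTop 0).mono fun n hn =>
    le_choquetOn_add_add_mesh_error hμ h0 hsm hX hY hXab hYab ((hXab ω).1.trans (hXab ω).2) hn)

theorem le_choquetOn_add [Nonempty Ω] (hμ : MonotoneOn μ {s | MeasurableSet s})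
    (h0 : μ ∅ = 0) (hsm : Supermodular F μ) (hX : Measurable X) (hY : Measurable Y)
    (hXab : ∀ ω, X ω ∈ Icc a b) (hYab : ∀ ω, Y ω ∈ Icc a' b') :
    choquetOn μ X a b + choquetOn μ Y a' b' ≤
      choquetOn μ (fun ω => X ω + Y ω) (a + a') (b + b') := by
  have hXY : ∀ ω, X ω + Y ω ∈ Icc (a + a') (b + b') := fun ω =>
    ⟨add_le_add (hXab ω).1 (hYab ω).1, add_le_add (hXab ω).2 (hYab ω).2⟩
  have hwiden : ∀ ω, X ω ∈ Icc (min a a') (max b b') ∧ Y ω ∈ Icc (min a a') (max b b') :=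
    fun ω => ⟨⟨(min_le_left _ _).trans (hXab ω).1, (hXab ω).2.trans (le_max_left _ _)⟩,
      ⟨(min_le_right _ _).trans (hYab ω).1, (hYab ω).2.trans (le_max_right _ _)⟩⟩
  rw [← choquetOn_eq_of_window hμ h0 hX hXab (min_le_left a a') (le_max_left b b'),
    ← choquetOn_eq_of_window hμ h0 hY hYab (min_le_right a a') (le_max_right b b'),
    ← choquetOn_eq_of_window (X := fun ω => X ω + Y ω) hμ h0 (hX.add hY) hXY
      (add_le_add (min_le_left a a') (min_le_right a a'))
      (add_le_add (le_max_left b b') (le_max_right b b'))]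
  exact le_choquetOn_add_of_same_window hμ h0 hsm hX hY (fun ω => (hwiden ω).1)
    fun ω => (hwiden ω).2

end Superadditivity

section Capacity

variable {Ω : Type*} {ν : Set Ω → ℝ} {α : ℝ}

def tailCap (ν : Set Ω → ℝ) (α : ℝ) (A : Set Ω) : ℝ := max (ν A - (1 - α)) 0

lemma tailCap_monotoneOn {S : Set (Set Ω)} (hν : MonotoneOn ν S) : MonotoneOn (tailCap ν α) S :=
  fun _ hA _ hB hAB => max_le_max (sub_le_sub_right (hν hA hB hAB) _) le_rfl

lemma tailCap_empty (h0 : ν ∅ = 0) (hα : α ≤ 1) : tailCap ν α ∅ = 0 := by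
  simp [tailCap, h0, hα]

lemma tailCap_univ (h1 : ν univ = 1) (hα : 0 ≤ α) : tailCap ν α univ = α := by
  simp [tailCap, h1, hα]

lemma tailCap_one {A : Set Ω} (hA : 0 ≤ ν A) : tailCap ν 1 A = ν A := by
  simp [tailCap, hA]

variable [F : MeasurableSpace Ω] {X Y : Ω → ℝ} {a b : ℝ}

lemma IsCapacity.monotoneOn (hν : IsCapacity F ν) : MonotoneOn ν {s | MeasurableSet s} :=
  fun A hA B hB hAB => hν.2.2 A B hA hB hAB

lemma IsCapacity.nonneg (hν : IsCapacity F ν) {A : Set Ω} (hA : MeasurableSet A) : 0 ≤ ν A :=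
  hν.1 ▸ hν.2.2 ∅ A MeasurableSet.empty hA (empty_subset A)

lemma IsCapacity.nonempty (hν : IsCapacity F ν) : Nonempty Ω := by
  by_contra h
  have h01 := hν.2.1
  rw [univ_eq_empty_iff.2 (not_nonempty_iff.1 h), hν.1] at h01
  norm_num at h01

lemma Supermodular.tailCap (hsm : Supermodular F ν) (hν : MonotoneOn ν {s | MeasurableSet s}) :
    Supermodular F (tailCap ν α) := fun A B hA hB => by
  have hAB := hsm A B hA hB
  have hA' := hν hA (hA.union hB) subset_union_left
  have hB' := hν hB (hA.union hB) subset_union_right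
  simp only [_root_.tailCap]
  rcases max_cases (ν A - (1 - α)) 0 with h | h <;>
    rcases max_cases (ν B - (1 - α)) 0 with h' | h' <;>
    linarith [le_max_left (ν (A ∪ B) - (1 - α)) 0, le_max_right (ν (A ∪ B) - (1 - α)) 0,
      le_max_left (ν (A ∩ B) - (1 - α)) 0, le_max_right (ν (A ∩ B) - (1 - α)) 0]

theorem integral_capQuantile_eq_choquetOn (hν : IsCapacity F ν) (hX : Measurable X)
    (hXab : ∀ ω, X ω ∈ Icc a b) (hα0 : 0 < α) (hα1 : α ≤ 1) :
    ∫ β in 0..α, capQuantile ν X β = choquetOn (tailCap ν α) X a b := by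
  have hlow : ∀ y < a, ν {ω | y < X ω} = 1 := fun y hy => by
    rw [eq_univ_of_forall (s := {ω | y < X ω}) fun ω => hy.trans_le (hXab ω).1, hν.2.1]
  have hhigh : ∀ y, b ≤ y → ν {ω | y < X ω} = 0 := fun y hy => by
    rw [eq_empty_of_forall_notMem (s := {ω | y < X ω}) fun ω hω => (hXab ω).2.not_gt
      (hy.trans_lt hω), hν.1]
  rw [choquetOn, tailCap_univ hν.2.1 hα0.le]
  exact integral_survivalQuantile (antitone_layer hν.monotoneOn hX) hlow hhigh hα0 hα1

theorem integral_capQuantile_concave (hν : IsCapacity F ν) (hsm : Supermodular F ν)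
    (hX : BddMeas F X) (hY : BddMeas F Y) {l : ℝ} (hl0 : 0 ≤ l) (hl1 : l ≤ 1)
    (hα0 : 0 < α) (hα1 : α ≤ 1) :
    l * (∫ β in 0..α, capQuantile ν X β) + (1 - l) * (∫ β in 0..α, capQuantile ν Y β) ≤
      ∫ β in 0..α, capQuantile ν (fun ω => l * X ω + (1 - l) * Y ω) β := by
  rcases hl0.eq_or_lt with rfl | hl0
  · simp
  rcases hl1.eq_or_lt with rfl | hl1
  · simp
  have := hν.nonempty
  obtain ⟨hXm, M, hM⟩ := hX
  obtain ⟨hYm, M', hM'⟩ := hY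
  have hwindow : ∀ {c : ℝ}, 0 < c → ∀ {Z : Ω → ℝ} {K : ℝ}, (∀ ω, |Z ω| ≤ K) →
      ∀ ω, c * Z ω ∈ Icc (c * -K) (c * K) := fun hc _ _ hK ω =>
    ⟨mul_le_mul_of_nonneg_left (abs_le.1 (hK ω)).1 hc.le,
      mul_le_mul_of_nonneg_left (abs_le.1 (hK ω)).2 hc.le⟩
  have hXw := hwindow hl0 hM
  have hYw := hwindow (sub_pos.2 hl1) hM'
  rw [integral_capQuantile_eq_choquetOn hν hXm (fun ω => abs_le.1 (hM ω)) hα0 hα1,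
    integral_capQuantile_eq_choquetOn hν hYm (fun ω => abs_le.1 (hM' ω)) hα0 hα1,
    integral_capQuantile_eq_choquetOn (X := fun ω => l * X ω + (1 - l) * Y ω) hν
      ((hXm.const_mul l).add (hYm.const_mul (1 - l)))
      (fun ω => ⟨add_le_add (hXw ω).1 (hYw ω).1, add_le_add (hXw ω).2 (hYw ω).2⟩) hα0 hα1,
    ← choquetOn_const_mul hl0, ← choquetOn_const_mul (sub_pos.2 hl1)]
  exact le_choquetOn_add (tailCap_monotoneOn hν.monotoneOn) (tailCap_empty hν.1 hα1)
    (hsm.tailCap hν.monotoneOn) (hXm.const_mul l) (hYm.const_mul (1 - l)) hXw hYw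

lemma bddMeas_ind {A : Set Ω} (hA : MeasurableSet A) : BddMeas F (ind A) :=
  ⟨measurable_const.indicator hA, 1, fun ω => by by_cases h : ω ∈ A <;> simp [ind, h]⟩

lemma integral_capQuantile_ind (hν : IsCapacity F ν) {A : Set Ω} (hA : MeasurableSet A) :
    ∫ β in 0..1, capQuantile ν (ind A) β = ν A := by
  have hL : ∀ C ∈ [A], MeasurableSet C := by simpa using hA
  have hstep : ind A = fun ω => 0 + 1 * (coverCount [A] ω : ℝ) := funext fun ω => by
    by_cases h : ω ∈ A <;> simp [ind, coverCount, h]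
  have hcov : coveredAtLeast [A] 1 = A := by
    ext ω
    by_cases h : ω ∈ A <;> simp [coveredAtLeast, coverCount, h]
  rw [hstep, integral_capQuantile_eq_choquetOn hν (measurable_step hL)
    (step_mem_Icc zero_le_one _) one_pos le_rfl,
    choquetOn_step (tailCap_monotoneOn hν.monotoneOn) hL zero_le_one rfl]
  simp [hcov, tailCap_one (hν.nonneg hA)]

lemma integral_capQuantile_midpoint_ind (hν : IsCapacity F ν) {A B : Set Ω}
    (hA : MeasurableSet A) (hB : MeasurableSet B) :
    ∫ β in 0..1, capQuantile ν (fun ω => 1 / 2 * ind A ω + (1 - 1 / 2) * ind B ω) β =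
      (ν (A ∪ B) + ν (A ∩ B)) / 2 := by
  have hL : ∀ C ∈ [A, B], MeasurableSet C := by simp [hA, hB]
  have hstep : (fun ω => 1 / 2 * ind A ω + (1 - 1 / 2) * ind B ω) =
      fun ω => 0 + 1 / 2 * (coverCount [A, B] ω : ℝ) := funext fun ω => by
    by_cases h : ω ∈ A <;> by_cases h' : ω ∈ B <;> norm_num [ind, coverCount, h, h']
  have hcov1 : coveredAtLeast [A, B] 1 = A ∪ B := by
    ext ω
    by_cases h : ω ∈ A <;> by_cases h' : ω ∈ B <;> simp [coveredAtLeast, coverCount, h, h']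
  have hcov2 : coveredAtLeast [A, B] 2 = A ∩ B := by
    ext ω
    by_cases h : ω ∈ A <;> by_cases h' : ω ∈ B <;> simp [coveredAtLeast, coverCount, h, h']
  rw [hstep, integral_capQuantile_eq_choquetOn hν (measurable_step hL)
    (step_mem_Icc (by norm_num) _) one_pos le_rfl,
    choquetOn_step (tailCap_monotoneOn hν.monotoneOn) hL (by norm_num) rfl]
  simp [Finset.sum_range_succ, hcov1, hcov2, tailCap_one (hν.nonneg (hA.union hB)),
    tailCap_one (hν.nonneg (hA.inter hB))]
  ring

end Capacity

/-- a continuous capacity is supermodular iff the associated Choquet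
act-to-distribution mapping is concave in the integrated-quantile (second-order
stochastic dominance) sense (Theorem `theo:SAA`). -/
theorem stmt3 {Ω : Type*} [F : MeasurableSpace Ω] (ν : Set Ω → ℝ)
    (hν : IsContinuousCapacity F ν) :
    Supermodular F ν ↔
    (∀ X Y : Ω → ℝ, BddMeas F X → BddMeas F Y → ∀ l : ℝ, 0 ≤ l → l ≤ 1 →
      ∀ α : ℝ, 0 < α → α ≤ 1 →
        l * (∫ β in (0:ℝ)..α, capQuantile ν X β) +
          (1 - l) * (∫ β in (0:ℝ)..α, capQuantile ν Y β) ≤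
        ∫ β in (0:ℝ)..α, capQuantile ν (fun ω => l * X ω + (1 - l) * Y ω) β) := by
  refine ⟨fun hsm X Y hX hY l hl0 hl1 α hα0 hα1 =>
    integral_capQuantile_concave hν.1 hsm hX hY hl0 hl1 hα0 hα1, fun h A B hA hB => ?_⟩
  have hmid := h (ind A) (ind B) (bddMeas_ind hA) (bddMeas_ind hB) (1 / 2) (by norm_num)
    (by norm_num) 1 one_pos le_rfl
  rw [integral_capQuantile_ind hν.1 hA, integral_capQuantile_ind hν.1 hB,
    integral_capQuantile_midpoint_ind hν.1 hA hB] at hmid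
  linarith
end
end

section
/- In the Savage setting with pure risk, if a preference relation ≿ on 𝒳 satisfies Axioms (M), (RC), (SRM), and (C), then there exists a statistic γ such that for all X, Y ∈ 𝒳(G): X ≿ Y ⇔ γ(X_#P) ≥ γ(Y_#P), where X_#P denotes the pushforward of P under X (which is a distribution since X is bounded). -/
open MeasureTheory Filter Topology

noncomputable section

/-!
By (M), (C) and (SRM) on constant acts, every bounded act `X` is indifferent to the constant act
at its certainty equivalent `CE X = sup {c | X ≿ c}`, so `≿` is represented by `CE`, and (C) makes
`CE` continuous along uniformly bounded pointwise limits. Atomlessness yields a random variable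
`U` uniform on `(0, 1)` (as the limit of nested dyadic splittings), and the statistic is
`γ Q = CE (q_Q ∘ U)` with `q_Q` the quantile function of `Q`. Since `q_Q ∘ U` has law `Q`, (RC)
gives `γ (X_#P) = CE X`. Quantile coupling turns `Q' ≤_fsd Q` into `q_Q' ∘ U ≤ q_Q ∘ U`
pointwise, with strict inequality on a set of positive probability when `Q' ≠ Q`; (M) and (SRM)
then give the monotonicity of `γ`. Weak convergence `Qn → Q` gives `q_Qn → q_Q` at the continuity
points of the monotone `q_Q`, hence almost surely along `U`; after changing the acts on a null set,
which (RC) makes invisible to `CE`, the continuity of `CE` gives that of `γ`.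
-/

open Set ProbabilityTheory

/-- The lower quantile function of `Q`, the left-continuous inverse of `cdf Q` (only its values
on `Ioo 0 1` matter). Unlike the upper quantile `distQuantile`, it satisfies the Galois connection
`quantile_le_iff`. -/
def quantile (Q : Measure ℝ) (α : ℝ) : ℝ := sInf {x | α ≤ cdf Q x}

section Quantile

variable {Q : Measure ℝ} {α x : ℝ}

theorem quantile_le_iff (hα : α ∈ Ioo 0 1) : quantile Q α ≤ x ↔ α ≤ cdf Q x := by
  set S := {x | α ≤ cdf Q x}
  have hne : S.Nonempty := ((tendsto_cdf_atTop Q).eventually (eventually_ge_nhds hα.2)).exists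
  obtain ⟨y, hy⟩ := ((tendsto_cdf_atBot Q).eventually
    (eventually_lt_nhds hα.1)).exists_forall_of_atBot
  have hbdd : BddBelow S := ⟨y, fun z hz => not_lt.mp fun hzy => (hy z hzy.le).not_ge hz⟩
  have hmem : sInf S ∈ S := by
    refine ge_of_tendsto (((cdf Q).right_continuous _).mono_left
      (nhdsWithin_mono _ Ioi_subset_Ici_self)) ?_
    filter_upwards [self_mem_nhdsWithin] with z hz
    obtain ⟨w, hwS, hwz⟩ := exists_lt_of_csInf_lt hne hz
    exact hwS.trans (monotone_cdf Q hwz.le)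
  exact ⟨fun h => hmem.trans (monotone_cdf Q h), fun h => csInf_le hbdd h⟩

theorem lt_quantile_iff (hα : α ∈ Ioo 0 1) : x < quantile Q α ↔ cdf Q x < α := by
  simpa only [not_le] using (quantile_le_iff hα).not

theorem le_cdf_quantile (hα : α ∈ Ioo 0 1) : α ≤ cdf Q (quantile Q α) :=
  (quantile_le_iff hα).mp le_rfl

theorem monotoneOn_quantile : MonotoneOn (quantile Q) (Ioo 0 1) :=
  fun _ hα _ hβ hαβ => (quantile_le_iff hα).mpr (hαβ.trans (le_cdf_quantile hβ))

theorem quantile_mem_Icc [IsProbabilityMeasure Q] {a b : ℝ} (hab : Q (Icc a b) = 1)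
    (hα : α ∈ Ioo 0 1) : quantile Q α ∈ Icc a b := by
  refine ⟨not_lt.mp fun hlt => ?_, (quantile_le_iff hα).mpr ?_⟩
  · have hnull : Q (Iic (quantile Q α)) = 0 :=
      measure_mono_null (fun y (hy : y ≤ _) (hyab : y ∈ Icc a b) =>
        (hy.trans_lt hlt).not_ge hyab.1) ((prob_compl_eq_zero_iff measurableSet_Icc).mpr hab)
    have := le_cdf_quantile (Q := Q) hα
    rw [cdf_eq_real, measureReal_def, hnull, ENNReal.toReal_zero] at this
    exact hα.1.not_ge this
  · rw [cdf_eq_real, measureReal_def,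
      le_antisymm prob_le_one (hab ▸ measure_mono Icc_subset_Iic_self), ENNReal.toReal_one]
    exact hα.2.le

theorem abs_quantile_le [IsProbabilityMeasure Q] {a b : ℝ} (hab : Q (Icc a b) = 1)
    (hα : α ∈ Ioo 0 1) : |quantile Q α| ≤ max |a| |b| :=
  abs_le_max_abs_abs (quantile_mem_Icc hab hα).1 (quantile_mem_Icc hab hα).2

theorem quantile_le_quantile_of_cdf_le {P : Measure ℝ}
    (h : ∀ x, cdf Q x ≤ cdf P x) (hα : α ∈ Ioo 0 1) : quantile P α ≤ quantile Q α :=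
  (quantile_le_iff hα).mpr ((le_cdf_quantile hα).trans (h _))

end Quantile

theorem cdf_le_cdf_of_fsdle {P Q : Measure ℝ} [IsProbabilityMeasure P] [IsProbabilityMeasure Q]
    (h : FSDle P Q) (x : ℝ) : cdf Q x ≤ cdf P x := by
  rw [cdf_eq_real, cdf_eq_real, ← compl_compl (Iic x), compl_Iic,
    probReal_compl_eq_one_sub measurableSet_Ioi, probReal_compl_eq_one_sub measurableSet_Ioi]
  exact sub_le_sub_left (ENNReal.toReal_mono (measure_ne_top _ _) (h x)) 1

theorem exists_mem_Ioo_measure_singleton_eq_zero (Q : Measure ℝ) [IsFiniteMeasure Q] {u v : ℝ}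
    (huv : u < v) : ∃ x ∈ Ioo u v, Q {x} = 0 := by
  obtain ⟨x, hx, hxuv⟩ := ((Measure.countable_meas_level_set_pos (μ := Q)
    measurable_id).dense_compl ℝ).exists_between huv
  exact ⟨x, hxuv, by simpa using hx⟩

theorem tendsto_quantile {Q : Measure ℝ} [IsFiniteMeasure Q] {Qn : ℕ → Measure ℝ} {α : ℝ}
    (hcdf : ∀ x, Q {x} = 0 → Tendsto (fun n => cdf (Qn n) x) atTop (𝓝 (cdf Q x)))
    (hα : α ∈ Ioo 0 1) (hcont : ContinuousWithinAt (quantile Q) (Ioo 0 1 ∩ Ioi α) α) :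
    Tendsto (fun n => quantile (Qn n) α) atTop (𝓝 (quantile Q α)) := by
  refine tendsto_order.mpr ⟨fun c hc => ?_, fun c hc => ?_⟩
  · obtain ⟨y, ⟨hcy, hyq⟩, hy⟩ := exists_mem_Ioo_measure_singleton_eq_zero Q hc
    filter_upwards [(hcdf y hy).eventually
      (eventually_lt_nhds ((lt_quantile_iff hα).mp hyq))] with n hn
    exact hcy.trans ((lt_quantile_iff hα).mpr hn)
  · rw [Ioo_inter_Ioi, max_eq_right hα.1.le] at hcont
    have := left_nhdsWithin_Ioo_neBot hα.2
    obtain ⟨β, hβc, hαβ, hβ1⟩ :=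
      ((hcont.eventually (eventually_lt_nhds hc)).and self_mem_nhdsWithin).exists
    obtain ⟨y, ⟨hqy, hyc⟩, hy⟩ := exists_mem_Ioo_measure_singleton_eq_zero Q hβc
    have hαy : α < cdf Q y := hαβ.trans_le
      ((le_cdf_quantile ⟨hα.1.trans hαβ, hβ1⟩).trans (monotone_cdf Q hqy.le))
    filter_upwards [(hcdf y hy).eventually (eventually_gt_nhds hαy)] with n hn
    exact ((quantile_le_iff hα).mpr hn.le).trans_lt hyc

theorem tendsto_cdf_of_weakConv {Qn : ℕ → Measure ℝ} {Q : Measure ℝ}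
    [hQn : ∀ n, IsProbabilityMeasure (Qn n)] [IsProbabilityMeasure Q] (hw : WeakConv Qn Q)
    {x : ℝ} (hx : Q {x} = 0) : Tendsto (fun n => cdf (Qn n) x) atTop (𝓝 (cdf Q x)) := by
  let μ : ProbabilityMeasure ℝ := ⟨Q, inferInstance⟩
  let μs : ℕ → ProbabilityMeasure ℝ := fun n => ⟨Qn n, hQn n⟩
  have hlim : Tendsto μs atTop (𝓝 μ) :=
    ProbabilityMeasure.tendsto_iff_forall_integral_tendsto.mpr hw
  simp only [cdf_eq_real, measureReal_def]
  exact (ENNReal.tendsto_toReal (measure_ne_top _ _)).comp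
    (ProbabilityMeasure.tendsto_measure_of_null_frontier_of_tendsto' hlim
      (by rwa [frontier_Iic]))

section DyadicChain

variable {Ω : Type*} (half : Set Ω → Set Ω)

/-- Nested events, indexed by the dyadic levels `k / 2 ^ n`, from which the uniform variable is
built: level `n + 1` keeps level `n` at even indices and, at odd ones, adds to the lower set
`half` of the layer up to the next one. -/
def dyadicChain : ℕ → ℕ → Set Ω
  | 0, k => if k = 0 then ∅ else univ
  | n + 1, k => if Even k then dyadicChain n (k / 2) else
      dyadicChain n (k / 2) ∪ half (dyadicChain n (k / 2 + 1) \ dyadicChain n (k / 2))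

theorem dyadicChain_succ_two_mul (n k : ℕ) :
    dyadicChain half (n + 1) (2 * k) = dyadicChain half n k := by
  simp [dyadicChain]

theorem dyadicChain_succ_two_mul_add_one (n k : ℕ) :
    dyadicChain half (n + 1) (2 * k + 1) =
      dyadicChain half n k ∪ half (dyadicChain half n (k + 1) \ dyadicChain half n k) := by
  simp [dyadicChain, Nat.add_div_of_dvd_right]

theorem dyadicChain_subset_succ (hsub : ∀ A, half A ⊆ A) (n k : ℕ) :
    dyadicChain half n k ⊆ dyadicChain half n (k + 1) := by
  induction n generalizing k with
  | zero => cases k <;> simp [dyadicChain]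
  | succ n ih =>
    obtain ⟨j, rfl | rfl⟩ := Nat.even_or_odd' k
    · rw [dyadicChain_succ_two_mul, dyadicChain_succ_two_mul_add_one]
      exact subset_union_left
    · rw [dyadicChain_succ_two_mul_add_one, show 2 * j + 1 + 1 = 2 * (j + 1) by ring,
        dyadicChain_succ_two_mul]
      exact union_subset (ih j) ((hsub _).trans sdiff_subset)

theorem monotone_dyadicChain (hsub : ∀ A, half A ⊆ A) (n : ℕ) : Monotone (dyadicChain half n) :=
  monotone_nat_of_le_succ (dyadicChain_subset_succ half hsub n)

theorem dyadicChain_add_two_pow_mul (n i k : ℕ) :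
    dyadicChain half (n + i) (2 ^ i * k) = dyadicChain half n k := by
  induction i with
  | zero => simp
  | succ i ih => rw [← add_assoc, pow_succ', mul_assoc, dyadicChain_succ_two_mul, ih]

theorem dyadicChain_subset_or_subset (hsub : ∀ A, half A ⊆ A) (n k n' k' : ℕ) :
    dyadicChain half n k ⊆ dyadicChain half n' k' ∨
      dyadicChain half n' k' ⊆ dyadicChain half n k := by
  wlog h : n ≤ n' generalizing n k n' k'
  · exact (this n' k' n k (le_of_not_ge h)).symm
  obtain ⟨i, rfl⟩ := Nat.exists_eq_add_of_le h
  rw [← dyadicChain_add_two_pow_mul half n i k]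
  exact (le_total _ _).imp (fun h => monotone_dyadicChain half hsub _ h)
    (fun h => monotone_dyadicChain half hsub _ h)

variable [MeasurableSpace Ω]

theorem measurableSet_dyadicChain (hmeas : ∀ A, MeasurableSet A → MeasurableSet (half A))
    (n k : ℕ) : MeasurableSet (dyadicChain half n k) := by
  induction n generalizing k with
  | zero => cases k <;> simp [dyadicChain]
  | succ n ih =>
    obtain ⟨j, rfl | rfl⟩ := Nat.even_or_odd' k
    · rw [dyadicChain_succ_two_mul]
      exact ih j
    · rw [dyadicChain_succ_two_mul_add_one]
      exact (ih j).union (hmeas _ ((ih _).diff (ih j)))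

theorem measureReal_dyadicChain {P : Measure Ω} [IsProbabilityMeasure P]
    (hsub : ∀ A, half A ⊆ A)
    (hhalf : ∀ A, MeasurableSet A → MeasurableSet (half A) ∧ P.real (half A) = P.real A / 2)
    (n k : ℕ) : P.real (dyadicChain half n k) = (min k (2 ^ n) : ℕ) / 2 ^ n := by
  have hmeas := measurableSet_dyadicChain half (fun A hA => (hhalf A hA).1)
  induction n generalizing k with
  | zero => cases k <;> simp [dyadicChain]
  | succ n ih =>
    obtain ⟨j, rfl | rfl⟩ := Nat.even_or_odd' k
    · rw [dyadicChain_succ_two_mul, ih, pow_succ', Nat.mul_min_mul_left]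
      push_cast
      field_simp
      ring
    · have hlayer := hhalf _ ((hmeas n (j + 1)).diff (hmeas n j))
      rw [dyadicChain_succ_two_mul_add_one,
        measureReal_union (disjoint_sdiff_right.mono_right (hsub _)) hlayer.1, hlayer.2,
        measureReal_sdiff (dyadicChain_subset_succ half hsub n j) (hmeas n j), ih, ih,
        -- one identity for both `j < 2 ^ n` and the saturated case `2 ^ n ≤ j`
        show min (2 * j + 1) (2 ^ (n + 1)) = min j (2 ^ n) + min (j + 1) (2 ^ n) by
          rw [pow_succ]; omega]
      push_cast
      field_simp
      ring

end DyadicChain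

theorem exists_nat_div_two_pow_mem_Ioo {y x : ℝ} (hy : 0 ≤ y) (hyx : y < x) :
    ∃ n k : ℕ, (k : ℝ) / 2 ^ n ∈ Ioo y x := by
  obtain ⟨n, hn⟩ := pow_unbounded_of_one_lt (x - y)⁻¹ one_lt_two
  have h2n : (0 : ℝ) < 2 ^ n := by positivity
  have hfloor := Nat.floor_le (mul_nonneg hy h2n.le)
  have hgap : 1 < (x - y) * 2 ^ n := by rwa [inv_lt_iff_one_lt_mul₀' (sub_pos.mpr hyx)] at hn
  refine ⟨n, ⌊y * 2 ^ n⌋₊ + 1, ?_, ?_⟩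
  · rw [lt_div_iff₀ h2n]
    push_cast
    exact Nat.lt_floor_add_one _
  · rw [div_lt_iff₀ h2n]
    push_cast
    linarith

section DyadicUniform

variable {Ω : Type*} (half : Set Ω → Set Ω)

def dyadicUniform (ω : Ω) : ℝ :=
  sInf {x | ∃ n k : ℕ, ω ∈ dyadicChain half n k ∧ (k : ℝ) / 2 ^ n = x}

theorem setOf_dyadicUniform_lt (x : ℝ) :
    {ω | dyadicUniform half ω < x} =
      ⋃ p ∈ {p : ℕ × ℕ | (p.2 : ℝ) / 2 ^ p.1 < x}, dyadicChain half p.1 p.2 := by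
  ext ω
  set S := {x | ∃ n k : ℕ, ω ∈ dyadicChain half n k ∧ (k : ℝ) / 2 ^ n = x}
  have hbdd : BddBelow S := ⟨0, by rintro _ ⟨n, k, -, rfl⟩; positivity⟩
  have hne : S.Nonempty := ⟨1, 0, 1, by simp [dyadicChain]⟩
  change sInf S < x ↔ _
  rw [csInf_lt_iff hbdd hne]
  simp only [mem_iUnion, Prod.exists]
  constructor
  · rintro ⟨_, ⟨n, k, hω, rfl⟩, hx⟩
    exact ⟨n, k, hx, hω⟩
  · rintro ⟨n, k, hx, hω⟩
    exact ⟨_, ⟨n, k, hω, rfl⟩, hx⟩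

variable [MeasurableSpace Ω]

theorem measurable_dyadicUniform (hmeas : ∀ A, MeasurableSet A → MeasurableSet (half A)) :
    Measurable (dyadicUniform half) :=
  measurable_of_Iio fun x => by
    change MeasurableSet {ω | dyadicUniform half ω < x}
    rw [setOf_dyadicUniform_lt]
    exact .biUnion (to_countable _) fun p _ => measurableSet_dyadicChain half hmeas _ _

variable {P : Measure Ω} [IsProbabilityMeasure P] (hsub : ∀ A, half A ⊆ A)
  (hhalf : ∀ A, MeasurableSet A → MeasurableSet (half A) ∧ P.real (half A) = P.real A / 2)
include hsub hhalf

theorem measure_dyadicUniform_lt {x : ℝ} (hx : x ∈ Icc 0 1) :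
    P {ω | dyadicUniform half ω < x} = ENNReal.ofReal x := by
  have hchain (n k : ℕ) :
      P (dyadicChain half n k) = ENNReal.ofReal ((min k (2 ^ n) : ℕ) / 2 ^ n) := by
    rw [← measureReal_dyadicChain half hsub hhalf, ofReal_measureReal]
  have hdir : DirectedOn (Function.onFun (· ⊆ ·) fun p : ℕ × ℕ => dyadicChain half p.1 p.2)
      {p : ℕ × ℕ | (p.2 : ℝ) / 2 ^ p.1 < x} := by
    intro p hp q hq
    rcases dyadicChain_subset_or_subset half hsub p.1 p.2 q.1 q.2 with h | h
    exacts [⟨q, hq, h, subset_rfl⟩, ⟨p, hp, subset_rfl, h⟩]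
  rw [setOf_dyadicUniform_lt, measure_biUnion_eq_iSup (to_countable _) hdir]
  refine le_antisymm (iSup₂_le fun p hp => ?_) (le_of_forall_lt fun c hc => ?_)
  · rw [hchain]
    refine ENNReal.ofReal_le_ofReal (le_trans ?_ hp.le)
    gcongr
    exact_mod_cast min_le_left _ _
  · have hc_top : c ≠ ⊤ := (hc.trans ENNReal.ofReal_lt_top).ne
    obtain ⟨n, k, hck, hkx⟩ := exists_nat_div_two_pow_mem_Ioo ENNReal.toReal_nonneg
      ((ENNReal.lt_ofReal_iff_toReal_lt hc_top).mp hc)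
    have hk : k ≤ 2 ^ n := by
      have : (k : ℝ) ≤ 2 ^ n := by
        rw [← div_le_one (by positivity)]
        exact hkx.le.trans hx.2
      exact_mod_cast this
    refine lt_of_lt_of_le ?_
      (le_iSup₂ (f := fun p _ => P (dyadicChain half p.1 p.2)) (n, k) hkx)
    rw [hchain, min_eq_left hk]
    exact (ENNReal.lt_ofReal_iff_toReal_lt hc_top).mpr hck

theorem map_dyadicUniform : P.map (dyadicUniform half) = volume.restrict (Icc 0 1) := by
  have hU := measurable_dyadicUniform half fun A hA => (hhalf A hA).1
  refine ext_of_generate_finite _ (BorelSpace.measurable_eq.trans (borel_eq_generateFrom_Iio ℝ))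
    isPiSystem_Iio ?_ (by simp [Measure.map_apply hU MeasurableSet.univ])
  rintro _ ⟨x, rfl⟩
  rw [Measure.map_apply hU measurableSet_Iio, Measure.restrict_apply measurableSet_Iio]
  change P {ω | dyadicUniform half ω < x} = _
  rcases le_or_gt x 0 with hx0 | hx0
  · have hempty : {ω | dyadicUniform half ω < x} = ∅ := by
      rw [setOf_dyadicUniform_lt]
      exact subset_empty_iff.mp (iUnion₂_subset fun p hp =>
        absurd hp (not_lt.mpr (hx0.trans (by positivity))))
    rw [hempty, ((Iio_disjoint_Ici hx0).mono_right Icc_subset_Ici_self).inter_eq, measure_empty,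
      measure_empty]
  rcases le_or_gt x 1 with hx1 | hx1
  · have hIco : Iio x ∩ Icc 0 1 = Ico 0 x := by
      ext y
      simp only [mem_inter_iff, mem_Iio, mem_Icc, mem_Ico]
      exact ⟨fun h => ⟨h.2.1, h.1⟩, fun h => ⟨h.2, h.1, h.2.le.trans hx1⟩⟩
    rw [measure_dyadicUniform_lt half hsub hhalf ⟨hx0.le, hx1⟩, hIco, Real.volume_Ico, sub_zero]
  · have huniv : {ω | dyadicUniform half ω < x} = univ :=
      eq_univ_of_forall fun ω => (setOf_dyadicUniform_lt half x).symm ▸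
        mem_iUnion₂.mpr ⟨(0, 1), by simpa using hx1, by simp [dyadicChain]⟩
    rw [huniv, inter_eq_right.mpr fun y hy => hy.2.trans_lt hx1, measure_univ, Real.volume_Icc,
      sub_zero, ENNReal.ofReal_one]

end DyadicUniform

theorem exists_isUniform_of_atomlessOn {Ω : Type*} {m : MeasurableSpace Ω} {P : Measure Ω}
    [IsProbabilityMeasure P] (hatom : AtomlessOn m P) :
    ∃ U : Ω → ℝ, Measurable U ∧ (∀ ω, U ω ∈ Ioo 0 1) ∧ pdf.IsUniform U (Icc 0 1) P := by
  have hbisect : ∀ A : Set Ω, ∃ B ⊆ A,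
      MeasurableSet A → MeasurableSet B ∧ P.real B = P.real A / 2 := by
    intro A
    by_cases hA : MeasurableSet A
    · obtain ⟨B, hB, hBA, hPB⟩ := hatom A hA (P A / 2) ENNReal.half_le_self
      exact ⟨B, hBA, fun _ => ⟨hB, by simp [measureReal_def, hPB, ENNReal.toReal_div]⟩⟩
    · exact ⟨∅, empty_subset A, fun h => absurd h hA⟩
  choose half hsub hhalf using hbisect
  have hU₀ := measurable_dyadicUniform half fun A hA => (hhalf A hA).1
  have hlaw := map_dyadicUniform half hsub hhalf
  have hae : ∀ᵐ ω ∂P, dyadicUniform half ω ∈ Ioo 0 1 := by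
    refine ae_of_ae_map hU₀.aemeasurable ?_
    rw [hlaw, Measure.restrict_congr_set Ioo_ae_eq_Icc.symm]
    exact ae_restrict_mem measurableSet_Ioo
  refine ⟨fun ω => if dyadicUniform half ω ∈ Ioo 0 1 then dyadicUniform half ω else 1 / 2,
    Measurable.ite (hU₀ measurableSet_Ioo) hU₀ measurable_const, fun ω => ?_, ?_⟩
  · dsimp only
    split_ifs with h
    exacts [h, ⟨by norm_num, by norm_num⟩]
  · rw [pdf.IsUniform, ProbabilityTheory.cond, Real.volume_Icc, sub_zero, ENNReal.ofReal_one,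
      inv_one, one_smul, ← hlaw]
    exact Measure.map_congr (hae.mono fun ω h => if_pos h)

section QuantileTransform

variable {Ω : Type*} {m : MeasurableSpace Ω} {P : Measure Ω} {U : Ω → ℝ}

theorem measure_preimage_of_isUniform_Icc (hunif : pdf.IsUniform U (Icc 0 1) P) {A : Set ℝ}
    (hA : MeasurableSet A) : P (U ⁻¹' A) = volume (Icc 0 1 ∩ A) := by
  rw [hunif.measure_preimage (by simp) (by simp) hA, Real.volume_Icc, sub_zero, ENNReal.ofReal_one,
    div_one]

variable (hU : Measurable U) (hU01 : ∀ ω, U ω ∈ Ioo 0 1)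

include hU01 in
theorem preimage_quantile_comp_Iic (Q : Measure ℝ) (x : ℝ) :
    (fun ω => quantile Q (U ω)) ⁻¹' Iic x = U ⁻¹' Iic (cdf Q x) :=
  ext fun ω => quantile_le_iff (hU01 ω)

include hU hU01 in
theorem measurable_quantile_comp (Q : Measure ℝ) : Measurable fun ω => quantile Q (U ω) :=
  measurable_of_Iic fun x => preimage_quantile_comp_Iic hU01 Q x ▸ hU measurableSet_Iic

include hU hU01 in
theorem bddMeas_quantile_comp {Q : Measure ℝ} [IsProbabilityMeasure Q] {a b : ℝ}
    (hab : Q (Icc a b) = 1) : BddMeas m fun ω => quantile Q (U ω) :=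
  ⟨measurable_quantile_comp hU hU01 Q, max |a| |b|, fun ω => abs_quantile_le hab (hU01 ω)⟩

include hU hU01 in
theorem map_quantile_comp (hunif : pdf.IsUniform U (Icc 0 1) P) (Q : Measure ℝ)
    [IsProbabilityMeasure Q] : P.map (fun ω => quantile Q (U ω)) = Q := by
  refine (Measure.ext_of_Iic Q _ fun x => ?_).symm
  have hIcc : Icc 0 1 ∩ Iic (cdf Q x) = Icc 0 (cdf Q x) := by
    ext y
    simp only [mem_inter_iff, mem_Icc, mem_Iic]
    exact ⟨fun h => ⟨h.1.1, h.2⟩, fun h => ⟨⟨h.1, h.2.trans (cdf_le_one Q x)⟩, h.2⟩⟩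
  rw [Measure.map_apply (measurable_quantile_comp hU hU01 Q) measurableSet_Iic,
    preimage_quantile_comp_Iic hU01,
    measure_preimage_of_isUniform_Icc hunif measurableSet_Iic, hIcc, Real.volume_Icc, sub_zero,
    ofReal_cdf]

include hU01 in
theorem measure_quantile_comp_lt_pos (hunif : pdf.IsUniform U (Icc 0 1) P) {Q Q' : Measure ℝ}
    {x : ℝ} (hx : cdf Q x < cdf Q' x) : 0 < P {ω | quantile Q' (U ω) < quantile Q (U ω)} := by
  have hsub : U ⁻¹' Ioc (cdf Q x) (cdf Q' x) ⊆ {ω | quantile Q' (U ω) < quantile Q (U ω)} :=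
    fun ω hω =>
      ((quantile_le_iff (hU01 ω)).mpr hω.2).trans_lt ((lt_quantile_iff (hU01 ω)).mpr hω.1)
  refine lt_of_lt_of_le ?_ (measure_mono hsub)
  rw [measure_preimage_of_isUniform_Icc hunif measurableSet_Ioc, inter_eq_right.mpr
    (Ioc_subset_Icc_self.trans (Icc_subset_Icc (cdf_nonneg _ _) (cdf_le_one _ _))),
    Real.volume_Ioc]
  exact ENNReal.ofReal_pos.mpr (sub_pos.mpr hx)

end QuantileTransform

theorem bddMeas_const {Ω : Type*} (m : MeasurableSpace Ω) (c : ℝ) : BddMeas m fun _ : Ω => c :=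
  ⟨measurable_const, |c|, fun _ => le_rfl⟩

theorem BddMeas.mono {Ω : Type*} {F G : MeasurableSpace Ω} {X : Ω → ℝ} (hX : BddMeas G X)
    (hG : G ≤ F) : BddMeas F X :=
  ⟨hX.1.mono hG le_rfl, hX.2⟩

section CertaintyEquivalent

variable {Ω : Type*} {m : MeasurableSpace Ω} {pref : (Ω → ℝ) → (Ω → ℝ) → Prop} {X Y : Ω → ℝ}

/-- The axioms under which every bounded act is indifferent to a constant act
(`pref_const_certaintyEquiv`); the last one follows from (SRM). -/
structure IsRegularPref (m : MeasurableSpace Ω) (pref : (Ω → ℝ) → (Ω → ℝ) → Prop) : Prop where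
  totalPreorder : TotalPreorderOn m pref
  monotone : AxiomM m pref
  continuous : AxiomC m pref
  not_pref_const_of_lt : ∀ ⦃c c' : ℝ⦄, c' < c → ¬ pref (fun _ => c') (fun _ => c)

def certaintyEquiv (pref : (Ω → ℝ) → (Ω → ℝ) → Prop) (X : Ω → ℝ) : ℝ :=
  sSup {c : ℝ | pref X fun _ => c}

theorem AxiomC.const_of_tendsto {c : ℕ → ℝ} {c₀ : ℝ} (hC : AxiomC m pref) (hX : BddMeas m X)
    (hc : Tendsto c atTop (𝓝 c₀)) :
    ((∀ n, pref X fun _ => c n) → pref X fun _ => c₀) ∧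
      ((∀ n, pref (fun _ => c n) X) → pref (fun _ => c₀) X) := by
  obtain ⟨M, hM⟩ := (Metric.isBounded_range_of_tendsto c hc).exists_norm_le
  exact hC X hX (fun n _ => c n) (fun _ => c₀) (fun n => bddMeas_const m _) (bddMeas_const m _)
    ⟨M, fun n _ => hM _ (mem_range_self n)⟩ fun _ => hc

theorem AxiomC.isClosed_setOf_pref_const (hC : AxiomC m pref) (hX : BddMeas m X) :
    IsClosed {c : ℝ | pref X fun _ => c} :=
  IsSeqClosed.isClosed fun _ _ hc hlim => (hC.const_of_tendsto hX hlim).1 hc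

theorem AxiomC.isClosed_setOf_const_pref (hC : AxiomC m pref) (hX : BddMeas m X) :
    IsClosed {c : ℝ | pref (fun _ => c) X} :=
  IsSeqClosed.isClosed fun _ _ hc hlim => (hC.const_of_tendsto hX hlim).2 hc

namespace IsRegularPref

variable (hreg : IsRegularPref m pref)
include hreg

theorem trans {Z : Ω → ℝ} (hX : BddMeas m X) (hY : BddMeas m Y) (hZ : BddMeas m Z)
    (hXY : pref X Y) (hYZ : pref Y Z) : pref X Z :=
  hreg.totalPreorder.2 X Y Z hX hY hZ hXY hYZ

theorem pref_const_certaintyEquiv (hX : BddMeas m X) :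
    pref X (fun _ => certaintyEquiv pref X) ∧ pref (fun _ => certaintyEquiv pref X) X := by
  obtain ⟨M, hMX⟩ := hX.2
  set S := {c : ℝ | pref X fun _ => c}
  have hlow : -M ∈ S :=
    hreg.monotone _ _ hX (bddMeas_const m _) fun ω => neg_le_of_abs_le (hMX ω)
  have hup : ∀ c ∈ S, c ≤ M := fun c hc => not_lt.mp fun hMc =>
    hreg.not_pref_const_of_lt hMc <| hreg.trans (bddMeas_const m _) hX (bddMeas_const m _)
      (hreg.monotone _ _ (bddMeas_const m _) hX fun ω => le_of_abs_le (hMX ω)) hc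
  have hmem : sSup S ∈ S :=
    (hreg.continuous.isClosed_setOf_pref_const hX).csSup_mem ⟨_, hlow⟩ ⟨M, hup⟩
  -- every constant above `sSup S` is weakly preferred to `X`, and so is the limit `sSup S`
  have hIoi : Ioi (sSup S) ⊆ {c : ℝ | pref (fun _ => c) X} := fun c hc =>
    (hreg.totalPreorder.1 X _ hX (bddMeas_const m c)).resolve_left fun hcS =>
      (le_csSup ⟨M, hup⟩ hcS).not_gt hc
  refine ⟨hmem, (hreg.continuous.isClosed_setOf_const_pref hX).closure_subset_iff.mpr hIoi ?_⟩
  rw [closure_Ioi]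
  exact mem_Ici.mpr le_rfl

theorem pref_iff_certaintyEquiv_le (hX : BddMeas m X) (hY : BddMeas m Y) :
    pref X Y ↔ certaintyEquiv pref Y ≤ certaintyEquiv pref X := by
  have hcX := hreg.pref_const_certaintyEquiv hX
  have hcY := hreg.pref_const_certaintyEquiv hY
  refine ⟨fun h => not_lt.mp fun hlt => hreg.not_pref_const_of_lt hlt ?_, fun h => ?_⟩
  · exact hreg.trans (bddMeas_const m _) hY (bddMeas_const m _)
      (hreg.trans (bddMeas_const m _) hX hY hcX.2 h) hcY.1
  · exact hreg.trans hX (bddMeas_const m _) hY hcX.1 (hreg.trans (bddMeas_const m _)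
      (bddMeas_const m _) hY (hreg.monotone _ _ (bddMeas_const m _) (bddMeas_const m _)
        fun _ => h) hcY.2)

theorem certaintyEquiv_const (c : ℝ) : certaintyEquiv pref (fun _ => c) = c := by
  have h := hreg.pref_const_certaintyEquiv (bddMeas_const m c)
  exact le_antisymm (not_lt.mp fun hlt => hreg.not_pref_const_of_lt hlt h.1)
    (not_lt.mp fun hlt => hreg.not_pref_const_of_lt hlt h.2)

theorem pref_const_iff (hX : BddMeas m X) (c : ℝ) :
    (pref X fun _ => c) ↔ c ≤ certaintyEquiv pref X := by
  rw [hreg.pref_iff_certaintyEquiv_le hX (bddMeas_const m c), hreg.certaintyEquiv_const]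

theorem const_pref_iff (hX : BddMeas m X) (c : ℝ) :
    pref (fun _ => c) X ↔ certaintyEquiv pref X ≤ c := by
  rw [hreg.pref_iff_certaintyEquiv_le (bddMeas_const m c) hX, hreg.certaintyEquiv_const]

theorem tendsto_certaintyEquiv {Yn : ℕ → Ω → ℝ} (hYn : ∀ n, BddMeas m (Yn n)) (hY : BddMeas m Y)
    (hbdd : ∃ M, ∀ n ω, |Yn n ω| ≤ M) (hlim : ∀ ω, Tendsto (fun n => Yn n ω) atTop (𝓝 (Y ω))) :
    Tendsto (fun n => certaintyEquiv pref (Yn n)) atTop (𝓝 (certaintyEquiv pref Y)) := by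
  -- along a subsequence on which the bound fails, Axiom (C) passes it to the limit `Y`
  have hsub {φ : ℕ → ℕ} (hφ : StrictMono φ) (c : ℝ) :=
    hreg.continuous (fun _ => c) (bddMeas_const m c) (fun k => Yn (φ k)) Y (fun k => hYn _) hY
      (hbdd.imp fun M hM k => hM (φ k)) fun ω => (hlim ω).comp hφ.tendsto_atTop
  refine tendsto_order.mpr ⟨fun c hc => ?_, fun c hc => ?_⟩
  · by_contra hev
    obtain ⟨φ, hφ, hle⟩ := extraction_of_frequently_atTop (not_eventually.mp hev)
    refine (not_lt.mpr ?_) hc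
    exact (hreg.const_pref_iff hY c).mp
      ((hsub hφ c).1 fun k => (hreg.const_pref_iff (hYn _) c).mpr (not_lt.mp (hle k)))
  · by_contra hev
    obtain ⟨φ, hφ, hle⟩ := extraction_of_frequently_atTop (not_eventually.mp hev)
    refine (not_lt.mpr ?_) hc
    exact (hreg.pref_const_iff hY c).mp
      ((hsub hφ c).2 fun k => (hreg.pref_const_iff (hYn _) c).mpr (not_lt.mp (hle k)))

end IsRegularPref

end CertaintyEquivalent

section RiskPreference

variable {Ω : Type*} {F G : MeasurableSpace Ω} {P : @Measure Ω G}
  {pref : (Ω → ℝ) → (Ω → ℝ) → Prop} {X Y : Ω → ℝ}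

theorem AxiomSRM.not_pref_const_of_lt [IsProbabilityMeasure P] (hSRM : AxiomSRM G P pref)
    ⦃c c' : ℝ⦄ (h : c' < c) : ¬ pref (fun _ => c') (fun _ => c) :=
  (hSRM _ _ (bddMeas_const G c) (bddMeas_const G c') (by simp [h.le]) (by simp [h])).2

theorem isDistribution_map [IsProbabilityMeasure P] (hX : BddMeas G X) :
    IsDistribution (@Measure.map Ω ℝ G _ X P) := by
  obtain ⟨M, hM⟩ := hX.2
  refine ⟨Measure.isProbabilityMeasure_map hX.1.aemeasurable, -M, M, ?_⟩
  rw [Measure.map_apply hX.1 measurableSet_Icc,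
    eq_univ_of_forall fun ω => mem_preimage.mpr (abs_le.mp (hM ω) : X ω ∈ Icc (-M) M),
    measure_univ]

namespace IsRegularPref

variable (hreg : IsRegularPref F pref) (hG : G ≤ F)
include hreg hG

theorem certaintyEquiv_eq_of_axiomRC (hRC : AxiomRC G P pref) (hX : BddMeas G X)
    (hY : BddMeas G Y) (h : ∀ x, P {ω | x < X ω} = P {ω | x < Y ω}) :
    certaintyEquiv pref X = certaintyEquiv pref Y :=
  le_antisymm ((hreg.pref_iff_certaintyEquiv_le (hY.mono hG) (hX.mono hG)).mp (hRC X Y hX hY h).2)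
    ((hreg.pref_iff_certaintyEquiv_le (hX.mono hG) (hY.mono hG)).mp (hRC X Y hX hY h).1)

theorem certaintyEquiv_congr_ae (hRC : AxiomRC G P pref) (hX : BddMeas G X) (hY : BddMeas G Y)
    (h : X =ᵐ[P] Y) : certaintyEquiv pref X = certaintyEquiv pref Y :=
  hreg.certaintyEquiv_eq_of_axiomRC hG hRC hX hY fun x =>
    measure_congr (h.mono fun _ hω => congrArg (x < ·) hω)

theorem tendsto_certaintyEquiv_of_ae (hRC : AxiomRC G P pref) {Yn : ℕ → Ω → ℝ}
    (hYn : ∀ n, BddMeas G (Yn n)) (hY : BddMeas G Y) (hbdd : ∃ M, ∀ n ω, |Yn n ω| ≤ M)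
    (hlim : ∀ᵐ ω ∂P, Tendsto (fun n => Yn n ω) atTop (𝓝 (Y ω))) :
    Tendsto (fun n => certaintyEquiv pref (Yn n)) atTop (𝓝 (certaintyEquiv pref Y)) := by
  classical
  obtain ⟨M, hM⟩ := hbdd
  obtain ⟨MY, hMY⟩ := hY.2
  set N := toMeasurable P {ω | ¬Tendsto (fun n => Yn n ω) atTop (𝓝 (Y ω))}
  have hN : MeasurableSet[G] N := measurableSet_toMeasurable _ _
  have hNnull : ∀ᵐ ω ∂P, ω ∉ N :=
    measure_eq_zero_iff_ae_notMem.mp (by rw [measure_toMeasurable]; exact ae_iff.mp hlim)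
  set Zn : ℕ → Ω → ℝ := fun n => N.piecewise Y (Yn n)
  have hZbdd : ∀ n ω, |Zn n ω| ≤ max M MY := fun n ω => by
    by_cases hω : ω ∈ N
    · simpa only [Zn, piecewise_eq_of_mem _ _ _ hω] using le_max_of_le_right (hMY ω)
    · simpa only [Zn, piecewise_eq_of_notMem _ _ _ hω] using le_max_of_le_left (hM n ω)
  have hZn : ∀ n, BddMeas G (Zn n) := fun n => ⟨hY.1.piecewise hN (hYn n).1, _, hZbdd n⟩
  have hZlim : ∀ ω, Tendsto (fun n => Zn n ω) atTop (𝓝 (Y ω)) := fun ω => by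
    by_cases hω : ω ∈ N
    · simpa only [Zn, piecewise_eq_of_mem _ _ _ hω] using tendsto_const_nhds
    · simpa only [Zn, piecewise_eq_of_notMem _ _ _ hω] using
        not_not.mp fun h => hω (subset_toMeasurable _ _ h)
  have hCE : ∀ n, certaintyEquiv pref (Zn n) = certaintyEquiv pref (Yn n) := fun n =>
    hreg.certaintyEquiv_congr_ae hG hRC (hZn n) (hYn n)
      (hNnull.mono fun _ hω => piecewise_eq_of_notMem _ _ _ hω)
  simpa only [hCE] using
    hreg.tendsto_certaintyEquiv (fun n => (hZn n).mono hG) (hY.mono hG) ⟨_, hZbdd⟩ hZlim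

theorem certaintyEquiv_lt_of_axiomSRM (hSRM : AxiomSRM G P pref) (hX : BddMeas G X)
    (hY : BddMeas G Y) (h1 : P {ω | Y ω ≤ X ω} = 1) (h2 : 0 < P {ω | Y ω < X ω}) :
    certaintyEquiv pref Y < certaintyEquiv pref X :=
  not_le.mp ((hreg.pref_iff_certaintyEquiv_le (hY.mono hG) (hX.mono hG)).not.mp
    (hSRM X Y hX hY h1 h2).2)

end IsRegularPref

end RiskPreference

section QuantileStatistic

variable {Ω : Type*} {F G : MeasurableSpace Ω} {P : @Measure Ω G}
  {pref : (Ω → ℝ) → (Ω → ℝ) → Prop} {U : Ω → ℝ}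

def quantileStatistic (pref : (Ω → ℝ) → (Ω → ℝ) → Prop) (U : Ω → ℝ) (Q : Measure ℝ) : ℝ :=
  certaintyEquiv pref fun ω => quantile Q (U ω)

variable (hreg : IsRegularPref F pref) (hG : G ≤ F) (hU : Measurable[G] U)
  (hU01 : ∀ ω, U ω ∈ Ioo 0 1)
include hreg hG hU hU01

theorem quantileStatistic_le_of_fsdle {Q Q' : Measure ℝ} (hQ : IsDistribution Q)
    (hQ' : IsDistribution Q') (h : FSDle Q' Q) :
    quantileStatistic pref U Q' ≤ quantileStatistic pref U Q := by
  obtain ⟨_, a, b, hab⟩ := hQ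
  obtain ⟨_, a', b', hab'⟩ := hQ'
  have hX := (bddMeas_quantile_comp hU hU01 hab).mono hG
  have hX' := (bddMeas_quantile_comp hU hU01 hab').mono hG
  exact (hreg.pref_iff_certaintyEquiv_le hX hX').mp (hreg.monotone _ _ hX hX' fun ω =>
    quantile_le_quantile_of_cdf_le (cdf_le_cdf_of_fsdle h) (hU01 ω))

theorem quantileStatistic_lt_of_fsdle (hSRM : AxiomSRM G P pref)
    (hunif : pdf.IsUniform U (Icc 0 1) P) {Q Q' : Measure ℝ} (hQ : IsDistribution Q)
    (hQ' : IsDistribution Q') (h : FSDle Q' Q) (hne : Q ≠ Q') :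
    quantileStatistic pref U Q' < quantileStatistic pref U Q := by
  obtain ⟨_, a, b, hab⟩ := hQ
  obtain ⟨_, a', b', hab'⟩ := hQ'
  obtain ⟨x, hx⟩ : ∃ x, cdf Q x < cdf Q' x := by
    by_contra! hle
    exact hne (Measure.eq_of_cdf _ _ (StieltjesFunction.ext fun x =>
      le_antisymm (cdf_le_cdf_of_fsdle h x) (hle x)))
  refine hreg.certaintyEquiv_lt_of_axiomSRM hG hSRM (bddMeas_quantile_comp hU hU01 hab)
    (bddMeas_quantile_comp hU hU01 hab') ?_ (measure_quantile_comp_lt_pos hU01 hunif hx)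
  have hall : {ω | quantile Q' (U ω) ≤ quantile Q (U ω)} = univ :=
    eq_univ_of_forall fun ω => quantile_le_quantile_of_cdf_le (cdf_le_cdf_of_fsdle h) (hU01 ω)
  have := hunif.isProbabilityMeasure (by simp) (by simp)
  rw [hall, measure_univ]

theorem tendsto_quantileStatistic (hRC : AxiomRC G P pref)
    (hunif : pdf.IsUniform U (Icc 0 1) P) {Qn : ℕ → Measure ℝ} {Q : Measure ℝ}
    (hQn : ∀ n, IsDistribution (Qn n)) (hQ : IsDistribution Q)
    (hsupp : ∃ a b : ℝ, ∀ n, Qn n (Icc a b) = 1) (hw : WeakConv Qn Q) :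
    Tendsto (fun n => quantileStatistic pref U (Qn n)) atTop
      (𝓝 (quantileStatistic pref U Q)) := by
  obtain ⟨a, b, hab⟩ := hsupp
  obtain ⟨_, aQ, bQ, habQ⟩ := hQ
  have hprob : ∀ n, IsProbabilityMeasure (Qn n) := fun n => (hQn n).1
  set D := {α ∈ Ioo 0 1 | ¬ContinuousWithinAt (quantile Q) (Ioo 0 1 ∩ Ioi α) α}
  have hD : D.Countable := monotoneOn_quantile.countable_not_continuousWithinAt_Ioi
  have hUD : ∀ᵐ ω ∂P, U ω ∉ D := measure_eq_zero_iff_ae_notMem.mp <| by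
    change P (U ⁻¹' D) = 0
    rw [measure_preimage_of_isUniform_Icc hunif hD.measurableSet]
    exact measure_mono_null inter_subset_right (hD.measure_zero volume)
  refine hreg.tendsto_certaintyEquiv_of_ae hG hRC
    (fun n => bddMeas_quantile_comp hU hU01 (hab n)) (bddMeas_quantile_comp hU hU01 habQ)
    ⟨_, fun n ω => abs_quantile_le (hab n) (hU01 ω)⟩ ?_
  filter_upwards [hUD] with ω hω
  exact tendsto_quantile (fun x hx => tendsto_cdf_of_weakConv hw hx) (hU01 ω)
    (not_not.mp fun h => hω ⟨hU01 ω, h⟩)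

theorem quantileStatistic_map (hRC : AxiomRC G P pref)
    (hunif : pdf.IsUniform U (Icc 0 1) P) {X : Ω → ℝ} (hX : BddMeas G X) :
    quantileStatistic pref U (@Measure.map Ω ℝ G _ X P) = certaintyEquiv pref X := by
  have := hunif.isProbabilityMeasure (by simp) (by simp)
  obtain ⟨_, a, b, hab⟩ := isDistribution_map (P := P) hX
  refine hreg.certaintyEquiv_eq_of_axiomRC hG hRC (bddMeas_quantile_comp hU hU01 hab) hX
    fun x => ?_
  change P ((fun ω => quantile _ (U ω)) ⁻¹' Ioi x) = P (X ⁻¹' Ioi x)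
  rw [← Measure.map_apply (measurable_quantile_comp hU hU01 _) measurableSet_Ioi,
    map_quantile_comp hU hU01 hunif, Measure.map_apply hX.1 measurableSet_Ioi]

end QuantileStatistic

/-- under the regularity axioms, the pure-risk preferences are
represented by a statistic applied to pushforward distributions
(Proposition `prop:need1`). -/
theorem stmt8 {Ω : Type*} [F : MeasurableSpace Ω] (G : MeasurableSpace Ω) (hG : G ≤ F)
    (P : @Measure Ω G) (hP : @IsProbabilityMeasure Ω G P) (hatom : AtomlessOn G P)
    (pref : (Ω → ℝ) → (Ω → ℝ) → Prop) (hpref : TotalPreorderOn F pref)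
    (hM : AxiomM F pref) (hRC : AxiomRC G P pref) (hSRM : AxiomSRM G P pref)
    (hC : AxiomC F pref) :
    ∃ γ : Measure ℝ → ℝ, IsStatistic γ ∧
      ∀ X Y : Ω → ℝ, BddMeas G X → BddMeas G Y →
        (pref X Y ↔ γ (@Measure.map Ω ℝ G _ Y P) ≤ γ (@Measure.map Ω ℝ G _ X P)) := by
  obtain ⟨U, hU, hU01, hunif⟩ := exists_isUniform_of_atomlessOn hatom
  have hreg : IsRegularPref F pref := ⟨hpref, hM, hC, hSRM.not_pref_const_of_lt⟩
  refine ⟨quantileStatistic pref U,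
    ⟨fun _ _ => quantileStatistic_le_of_fsdle hreg hG hU hU01,
      fun _ _ => quantileStatistic_lt_of_fsdle hreg hG hU hU01 hSRM hunif,
      fun _ _ => tendsto_quantileStatistic hreg hG hU hU01 hRC hunif⟩,
    fun X Y hX hY => ?_⟩
  rw [quantileStatistic_map hreg hG hU hU01 hRC hunif hX,
    quantileStatistic_map hreg hG hU hU01 hRC hunif hY]
  exact hreg.pref_iff_certaintyEquiv_le (hX.mono hG) (hY.mono hG)
end
end
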